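/- arXiv:2603.05490 — 6 statements merged into one kernel-verified Lean document; each statement's English description precedes it below -/
import Mathlib

section
/- Let L : c_1 x_1 + ... + c_k x_k = 0 be a homogeneous linear equation with k ≥ 3, nonzero integer coefficients, and Σ_{i=1}^k c_i = 0. For every ε > 0 there exists δ = δ(ε, L) > 0 such that for every prime p and every set A ⊆ F_p with |A| ≥ εp, there are at least δ · p^{k−1} tuples (x_1, ..., x_k) ∈ A^k (repetitions allowed) with c_1 x_1 + ... + c_k x_k = 0 in F_p. -/
/-!
Three variables, `a x + b y - (a + b) z = 0`: the triangles `(x, x + a s, x + (a + b) s)`,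
`s ∈ S`, of the tripartite graph on three copies of `G` are edge-disjoint and there are
`|G| |S|` of them, so by triangle removal the graph has `≫ |G|³` triangles. A triangle
`(x, x + a s₀, x + a s₀ + b s₁)` closed by the edge of `s₂` gives the solution `(s₀, s₁, s₂) ∈ S³`,
and each solution accounts for only `|G|` triangles, hence `≫ |G|²` solutions.

More variables: reorder so that `c₀ + c₁ ≠ 0` and merge `c₀ x₀ + c₁ x₁` into `(c₀ + c₁) w`.
By induction the merged equation has `≫ p^(k-2)` solutions in `A`, and each fibre over `w` has
at most `p^(k-3)`, so a set `S ⊆ A` of density `≫ 1` of values `w` has fibres of size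
`≫ p^(k-3)`. The three-variable case gives `≫ p²` solutions of `c₀ u + c₁ v = (c₀ + c₁) w` in
`S³`, and each combines with the fibre over `w`.

This needs the coefficients to be nonzero modulo `p`; for the finitely many remaining primes the
constant solutions suffice.
-/

open Finset SimpleGraph TripartiteFromTriangles Function
open Fintype (card)

namespace LinearEquationCount

lemma sum_le_card_filter_mul_add {ι : Type*} (s : Finset ι) (f : ι → ℝ) {M η : ℝ}
    (hf : ∀ i ∈ s, f i ≤ M) (hη : 0 ≤ η) :
    ∑ i ∈ s, f i ≤ #{i ∈ s | η ≤ f i} * M + #s * η := by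
  rw [← sum_filter_add_sum_filter_not s (η ≤ f ·)]
  gcongr
  · simpa using sum_le_card_nsmul _ f M fun i hi => hf i (mem_filter.1 hi).1
  · calc ∑ i ∈ s with ¬η ≤ f i, f i ≤ #{i ∈ s | ¬η ≤ f i} * η := by
          simpa using sum_le_card_nsmul _ f η fun i hi => (not_le.1 (mem_filter.1 hi).2).le
      _ ≤ #s * η := by gcongr; exact filter_subset _ s

variable {G : Type*} [AddCommGroup G] [Fintype G] [DecidableEq G]

def linSolutions {k : ℕ} (c : Fin k → ℤ) (A : Finset G) : Finset (Fin k → G) :=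
  {x | (∀ i, x i ∈ A) ∧ ∑ i, c i • x i = 0}

@[simp]
lemma mem_linSolutions {k : ℕ} {c : Fin k → ℤ} {A : Finset G} {x : Fin k → G} :
    x ∈ linSolutions c A ↔ (∀ i, x i ∈ A) ∧ ∑ i, c i • x i = 0 := by
  simp [linSolutions]

lemma card_linSolutions_comp_perm {k : ℕ} (c : Fin k → ℤ) (π : Equiv.Perm (Fin k))
    (A : Finset G) : #(linSolutions (c ∘ π) A) = #(linSolutions c A) := by
  refine card_equiv (π.arrowCongr (Equiv.refl G)) fun x => ?_
  simp only [mem_linSolutions, Equiv.arrowCongr_apply, comp_apply, Equiv.coe_refl, id_eq]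
  refine and_congr (π.symm.forall_congr_right (q := (x · ∈ A))).symm ?_
  rw [← Equiv.sum_comp π (fun i => c i • x (π.symm i))]
  simp

lemma linSolutions_nonempty {k : ℕ} {c : Fin k → ℤ} (hsum : ∑ i, c i = 0) {A : Finset G}
    (hA : A.Nonempty) : (linSolutions c A).Nonempty := by
  obtain ⟨a, ha⟩ := hA
  exact ⟨fun _ => a, by simp [ha, ← sum_smul, hsum]⟩

lemma card_filter_linSolutions_cons_le {n : ℕ} (d : ℤ) (c : Fin (n + 1) → ℤ)
    (hc : Injective (c 0 • · : G → G)) (A : Finset G) (w : G) :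
    #{x ∈ linSolutions (Fin.cons d c) A | x 0 = w} ≤ card G ^ n := by
  calc _ ≤ #(univ : Finset (Fin n → G)) := ?_
    _ = _ := by simp
  refine card_le_card_of_injOn (fun x m => x m.succ.succ) (fun _ _ => mem_univ _) ?_
  intro x hx y hy hxy
  simp only [coe_filter, mem_linSolutions, Set.mem_ofPred_eq, Fin.sum_univ_succ, Fin.cons_zero,
    Fin.cons_succ] at hx hy
  obtain ⟨⟨-, hx⟩, hx0⟩ := hx
  obtain ⟨⟨-, hy⟩, hy0⟩ := hy
  have h0 : x 0 = y 0 := hx0.trans hy0.symm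
  have htail : ∀ m : Fin n, x m.succ.succ = y m.succ.succ := congrFun hxy
  have h1 : x 1 = y 1 := by
    simp_rw [h0, htail] at hx
    exact hc (add_right_cancel (add_left_cancel (hx.trans hy.symm)))
  funext i
  exact Fin.cases h0 (Fin.cases h1 htail) i

lemma sum_card_filter_linSolutions_le {n : ℕ} (a b : ℤ) (c : Fin n → ℤ)
    (hab : Injective ((a + b) • · : G → G)) {A S : Finset G} (hSA : S ⊆ A) :
    ∑ t ∈ linSolutions ![a, b, -(a + b)] S,
        #{x ∈ linSolutions (Fin.cons (a + b) c) A | x 0 = t 2} ≤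
      #(linSolutions (Fin.cons a (Fin.cons b c)) A) := by
  rw [← card_sigma]
  refine card_le_card_of_injOn (fun q => Fin.cons (q.1 0) (Fin.cons (q.1 1) (Fin.tail q.2)))
    ?_ ?_ <;>
    simp only [coe_sigma, Set.MapsTo, Set.InjOn, Set.mem_sigma_iff, mem_coe, mem_filter,
      mem_linSolutions, Fin.sum_univ_three, Fin.sum_univ_succ (n := n), Fin.cons_zero,
      Fin.cons_succ, Matrix.cons_val_zero, Matrix.cons_val_one, Matrix.cons_val_two,
      Matrix.tail_cons, Matrix.head_cons, Sigma.forall]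
  · intro t x hq
    obtain ⟨⟨ht, hteq⟩, ⟨hx, hxeq⟩, hx0⟩ := hq
    simp only [Fin.sum_univ_succ, Fin.cons_zero, Fin.cons_succ, Fin.tail]
    refine ⟨Fin.cases (hSA (ht 0)) (Fin.cases (hSA (ht 1)) fun i => hx i.succ), ?_⟩
    rw [hx0] at hxeq
    linear_combination (norm := module) hteq + hxeq
  · rintro t x ⟨⟨-, hteq⟩, -, hx0⟩ t' x' ⟨⟨-, hteq'⟩, -, hx0'⟩ h
    simp only [Fin.cons_inj] at h
    obtain ⟨h0, h1, htail⟩ := h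
    have h2 : t 2 = t' 2 :=
      hab (by linear_combination (norm := module) hteq' - hteq + a • h0 + b • h1)
    have ht : t = t' := by
      funext i
      fin_cases i <;> assumption
    subst ht
    rw [← Fin.cons_self_tail x, ← Fin.cons_self_tail x', hx0, hx0', htail]

section Triangles

variable (a b : ℤ) (S : Finset G)

def triangleIndices : Finset (G × G × G) :=
  (univ ×ˢ S).image fun q => (q.1, q.1 + a • q.2, q.1 + a • q.2 + b • q.2)

variable {a b S}

lemma mk_mem_triangleIndices {x y z : G} :
    (x, y, z) ∈ triangleIndices a b S ↔ ∃ s ∈ S, y = x + a • s ∧ z = y + b • s := by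
  simp only [triangleIndices, mem_image, mem_product, mem_univ, true_and, Prod.exists,
    Prod.mk.injEq]
  constructor
  · rintro ⟨x, s, hs, rfl, rfl, rfl⟩
    exact ⟨s, hs, rfl, rfl⟩
  · rintro ⟨s, hs, rfl, rfl⟩
    exact ⟨x, s, hs, rfl, rfl, rfl⟩

lemma card_triangleIndices (ha : Injective (a • · : G → G)) :
    #(triangleIndices a b S) = card G * #S := by
  rw [triangleIndices, card_image_of_injective, card_product, card_univ]
  rintro ⟨x, s⟩ ⟨x', s'⟩ h
  simp only [Prod.mk.injEq] at h
  obtain ⟨rfl, h, -⟩ := h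
  exact Prod.ext rfl (ha (add_left_cancel h))

lemma explicitDisjoint_triangleIndices (ha : Injective (a • · : G → G))
    (hb : Injective (b • · : G → G)) (hab : Injective ((a + b) • · : G → G)) :
    ExplicitDisjoint (triangleIndices a b S) where
  inj₀ := by
    simp only [mk_mem_triangleIndices]
    rintro x y z x' ⟨s, -, rfl, h⟩ ⟨s', -, hy, h'⟩
    obtain rfl : s = s' := hb (add_left_cancel (h.symm.trans h'))
    exact add_right_cancel hy
  inj₁ := by
    simp only [mk_mem_triangleIndices]
    rintro x y z y' ⟨s, -, rfl, h⟩ ⟨s', -, rfl, h'⟩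
    obtain rfl : s = s' := hab (by simpa [add_smul, add_assoc] using h.symm.trans h')
    rfl
  inj₂ := by
    simp only [mk_mem_triangleIndices]
    rintro x y z z' ⟨s, -, hy, rfl⟩ ⟨s', -, hy', rfl⟩
    obtain rfl : s = s' := ha (add_left_cancel (hy.symm.trans hy'))
    rfl

lemma cliqueFinset_subset_image_linSolutions :
    (graph (triangleIndices a b S)).cliqueFinset 3 ⊆
      (univ ×ˢ linSolutions ![a, b, -(a + b)] S).image
        fun q => toTriangle (q.1, q.1 + a • q.2 0, q.1 + a • q.2 0 + b • q.2 1) := by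
  intro t ht
  rw [mem_cliqueFinset_iff, is3Clique_iff] at ht
  obtain ⟨x, y, z, hxy, hxz, hyz, rfl⟩ := ht
  obtain ⟨u, v, w, huvw, huv, huw, hvw⟩ := graph_triple hxy hxz hyz
  simp only [Graph.in₀₁_iff, Graph.in₀₂_iff, Graph.in₁₂_iff, mk_mem_triangleIndices]
    at huv huw hvw
  obtain ⟨-, s₀, hs₀, rfl, -⟩ := huv
  obtain ⟨-, s₁, hs₁, -, rfl⟩ := hvw
  obtain ⟨-, s₂, hs₂, rfl, h⟩ := huw
  rw [← huvw, mem_image]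
  refine ⟨(u, ![s₀, s₁, s₂]), ?_, rfl⟩
  simp only [mem_product, mem_univ, true_and, mem_linSolutions, Fin.forall_fin_succ,
    Fin.sum_univ_three]
  refine ⟨⟨hs₀, hs₁, hs₂, fun i => i.elim0⟩, ?_⟩
  simp only [Matrix.cons_val_zero, Matrix.cons_val_one, Matrix.cons_val_two, Matrix.tail_cons,
    Matrix.head_cons]
  linear_combination (norm := module) h

lemma le_card_linSolutions_triple (ha : Injective (a • · : G → G))
    (hb : Injective (b • · : G → G)) (hab : Injective ((a + b) • · : G → G)) {σ : ℝ}
    (hS : σ * card G ≤ #S) :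
    27 * triangleRemovalBound (σ / 9) * card G ^ 2 ≤
      #(linSolutions ![a, b, -(a + b)] S) := by
  have := explicitDisjoint_triangleIndices (S := S) ha hb hab
  have hG : (0 : ℝ) < card G := by exact_mod_cast Fintype.card_pos
  have hfar : (graph (triangleIndices a b S)).FarFromTriangleFree (σ / 9) := by
    refine farFromTriangleFree _ ?_
    rw [card_triangleIndices ha]
    push_cast
    nlinarith
  have hcliques : #((graph (triangleIndices a b S)).cliqueFinset 3) ≤
      card G * #(linSolutions ![a, b, -(a + b)] S) :=
    (card_le_card cliqueFinset_subset_image_linSolutions).trans <|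
      card_image_le.trans (by rw [card_product, card_univ])
  have hremoval := hfar.le_card_cliqueFinset
  rw [Fintype.card_sum, Fintype.card_sum] at hremoval
  refine le_of_mul_le_mul_left ?_ hG
  calc (card G : ℝ) * (27 * triangleRemovalBound (σ / 9) * card G ^ 2)
      = triangleRemovalBound (σ / 9) * ((card G + (card G + card G) : ℕ) : ℝ) ^ 3 := by
        push_cast; ring
    _ ≤ _ := hremoval
    _ ≤ _ := by exact_mod_cast hcliques

end Triangles

lemma zsmul_injective_of_natAbs_lt {p : ℕ} [Fact p.Prime] {n : ℤ} (hn : n ≠ 0)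
    (hnp : n.natAbs < p) : Injective (n • · : ZMod p → ZMod p) := by
  have hcast : (n : ZMod p) ≠ 0 := by
    rw [Ne, ZMod.intCast_zmod_eq_zero_iff_dvd]
    exact fun h => hnp.not_ge (Nat.le_of_dvd (Int.natAbs_pos.2 hn) (Int.natCast_dvd.1 h))
  simpa only [zsmul_eq_mul] using mul_right_injective₀ hcast

def Supersaturated {k : ℕ} (c : Fin (k + 1) → ℤ) : Prop :=
  ∀ ε > (0 : ℝ), ∃ δ > (0 : ℝ), ∃ N : ℕ, ∀ (p : ℕ) [Fact p.Prime], N < p →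
    ∀ A : Finset (ZMod p), ε * p ≤ #A → δ * p ^ k ≤ #(linSolutions c A)

lemma supersaturated_comp_perm_iff {k : ℕ} (c : Fin (k + 1) → ℤ)
    (π : Equiv.Perm (Fin (k + 1))) :
    Supersaturated (c ∘ π) ↔ Supersaturated c := by
  simp only [Supersaturated, card_linSolutions_comp_perm]

lemma supersaturated_triple {a b : ℤ} (ha : a ≠ 0) (hb : b ≠ 0) (hab : a + b ≠ 0) :
    Supersaturated ![a, b, -(a + b)] := by
  intro ε hε
  have hbound := triangleRemovalBound_pos (ε := ε / 9) (by positivity)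
  refine ⟨27 * triangleRemovalBound (ε / 9), by positivity, a.natAbs + b.natAbs,
    fun p _ hp A hA => ?_⟩
  have hinj : ∀ n : ℤ, n ≠ 0 → n.natAbs ≤ a.natAbs + b.natAbs →
      Injective (n • · : ZMod p → ZMod p) :=
    fun n hn hnB => zsmul_injective_of_natAbs_lt hn (by omega)
  have := le_card_linSolutions_triple (hinj a ha (by omega)) (hinj b hb (by omega))
    (hinj (a + b) hab (Int.natAbs_add_le a b)) (S := A) (σ := ε) (by rwa [ZMod.card])
  rwa [ZMod.card] at this

lemma Supersaturated.cons_cons {n : ℕ} {a b : ℤ} {c : Fin (n + 1) → ℤ} (ha : a ≠ 0)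
    (hb : b ≠ 0) (hab : a + b ≠ 0) (hc : c 0 ≠ 0) (h : Supersaturated (Fin.cons (a + b) c)) :
    Supersaturated (Fin.cons a (Fin.cons b c)) := by
  intro ε hε
  obtain ⟨δ, hδ, N, hN⟩ := h ε hε
  have hbound := triangleRemovalBound_pos (ε := δ / 2 / 9) (by positivity)
  set B := a.natAbs + b.natAbs + (c 0).natAbs
  refine ⟨27 * triangleRemovalBound (δ / 2 / 9) * (δ / 2), by positivity, max N B,
    fun p _ hp A hA => ?_⟩
  have hinj : ∀ m : ℤ, m ≠ 0 → m.natAbs ≤ B → Injective (m • · : ZMod p → ZMod p) :=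
    fun m hm hmB => zsmul_injective_of_natAbs_lt hm (by omega)
  have hab' := hinj (a + b) hab (by have := Int.natAbs_add_le a b; omega)
  let fiber (w : ZMod p) := {x ∈ linSolutions (Fin.cons (a + b) c) A | x 0 = w}
  let S := {w ∈ A | δ / 2 * p ^ n ≤ #(fiber w)}
  have hfiber : ∀ w, (#(fiber w) : ℝ) ≤ p ^ n := fun w => by
    exact_mod_cast (card_filter_linSolutions_cons_le (a + b) c (hinj _ hc (by omega)) A w).trans
      (by rw [ZMod.card])
  have hS : δ / 2 * p ≤ #S := by
    have hsplit : #(linSolutions (Fin.cons (a + b) c) A) = ∑ w ∈ A, #(fiber w) :=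
      card_eq_sum_card_fiberwise fun x hx => (mem_linSolutions.1 hx).1 0
    have hAp : (#A : ℝ) ≤ p := by exact_mod_cast (card_le_univ A).trans (ZMod.card p).le
    have hmany : δ * p ^ (n + 1) ≤ ∑ w ∈ A, (#(fiber w) : ℝ) := by
      exact_mod_cast hsplit ▸ hN p (by omega) A hA
    have havg := sum_le_card_filter_mul_add A (fun w => (#(fiber w) : ℝ)) (fun w _ => hfiber w)
      (η := δ / 2 * p ^ n) (by positivity)
    have hp0 : (0 : ℝ) < p ^ n := by have := (Fact.out : p.Prime).pos; positivity
    have hsmall := mul_le_mul_of_nonneg_right hAp (by positivity : (0 : ℝ) ≤ δ / 2 * p ^ n)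
    refine le_of_mul_le_mul_right ?_ hp0
    rw [pow_succ] at hmany
    linarith
  have htriple := le_card_linSolutions_triple (hinj a ha (by omega)) (hinj b hb (by omega)) hab'
    (S := S) (σ := δ / 2) (by rwa [ZMod.card])
  rw [ZMod.card] at htriple
  have hmerge := sum_card_filter_linSolutions_le (S := S) a b c hab' (filter_subset _ A)
  calc 27 * triangleRemovalBound (δ / 2 / 9) * (δ / 2) * p ^ (n + 2)
      = 27 * triangleRemovalBound (δ / 2 / 9) * p ^ 2 * (δ / 2 * p ^ n) := by ring
    _ ≤ #(linSolutions ![a, b, -(a + b)] S) * (δ / 2 * p ^ n) := by gcongr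
    _ ≤ ∑ t ∈ linSolutions ![a, b, -(a + b)] S, (#(fiber (t 2)) : ℝ) := by
      rw [← nsmul_eq_mul]
      exact card_nsmul_le_sum _ _ _ fun t ht => (mem_filter.1 ((mem_linSolutions.1 ht).1 2)).2
    _ ≤ _ := by exact_mod_cast hmerge

lemma exists_perm_add_ne_zero {n : ℕ} (c : Fin (n + 3) → ℤ) (h0 : c 0 ≠ 0) :
    ∃ π : Equiv.Perm (Fin (n + 3)), c (π 0) + c (π 1) ≠ 0 := by
  by_contra! h
  have h01 := h 1
  have h02 := h (Equiv.swap 1 2)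
  have h12 := h (Equiv.swap 0 2)
  have h2 : 2 % (n + 3) = 2 := Nat.mod_eq_of_lt (by omega)
  have h02_ne : (0 : Fin (n + 3)) ≠ 2 := by simp [Fin.ext_iff, h2]
  have h12_ne : (1 : Fin (n + 3)) ≠ 2 := by simp [Fin.ext_iff, h2]
  simp only [Equiv.Perm.coe_one, id_eq, Equiv.swap_apply_left] at h01 h02 h12
  rw [Equiv.swap_apply_of_ne_of_ne zero_ne_one h02_ne] at h02
  rw [Equiv.swap_apply_of_ne_of_ne one_ne_zero h12_ne] at h12
  omega

theorem supersaturated {n : ℕ} (c : Fin (n + 3) → ℤ) (hc : ∀ i, c i ≠ 0)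
    (hsum : ∑ i, c i = 0) :
    Supersaturated c := by
  induction n with
  | zero =>
    have hc2 : c 2 = -(c 0 + c 1) := by
      rw [Fin.sum_univ_three] at hsum
      omega
    have hc_eq : c = ![c 0, c 1, -(c 0 + c 1)] := by
      ext i
      fin_cases i <;> simp [hc2]
    rw [hc_eq]
    exact supersaturated_triple (hc 0) (hc 1) (by have := hc 2; omega)
  | succ n ih =>
    obtain ⟨π, hπ⟩ := exists_perm_add_ne_zero c (hc 0)
    rw [← supersaturated_comp_perm_iff c π, ← Fin.cons_self_tail (c ∘ π),
      ← Fin.cons_self_tail (Fin.tail (c ∘ π))]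
    refine .cons_cons (hc _) (hc _) hπ (hc _) (ih _ ?_ ?_)
    · exact Fin.cases hπ fun i => hc _
    · have hsum_π := (Equiv.sum_comp π c).trans hsum
      simp only [Fin.sum_univ_succ, Fin.cons_zero, Fin.cons_succ, Fin.tail,
        Function.comp_apply] at hsum_π ⊢
      linarith

lemma Supersaturated.exists_forall_prime {k : ℕ} {c : Fin (k + 1) → ℤ} (h : Supersaturated c)
    (hsum : ∑ i, c i = 0) {ε : ℝ} (hε : 0 < ε) :
    ∃ δ > (0 : ℝ), ∀ (p : ℕ) [Fact p.Prime] (A : Finset (ZMod p)), ε * p ≤ #A →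
      δ * p ^ k ≤ #(linSolutions c A) := by
  obtain ⟨δ, hδ, N, hN⟩ := h ε hε
  refine ⟨min δ (((N : ℝ) + 1)⁻¹ ^ k), by positivity, fun p _ A hA => ?_⟩
  rcases lt_or_ge N p with hp | hp
  · exact (mul_le_mul_of_nonneg_right (min_le_left _ _) (by positivity)).trans (hN p hp A hA)
  have hA_pos : 0 < #A := by
    have : (0 : ℝ) < ε * p := mul_pos hε (by exact_mod_cast (Fact.out : p.Prime).pos)
    exact_mod_cast this.trans_le hA
  have hpN : (p : ℝ) ≤ N + 1 := by exact_mod_cast hp.trans N.le_succ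
  calc min δ (((N : ℝ) + 1)⁻¹ ^ k) * p ^ k ≤ ((N : ℝ) + 1)⁻¹ ^ k * p ^ k := by
        gcongr; exact min_le_right _ _
    _ = (p / ((N : ℝ) + 1)) ^ k := by rw [div_eq_inv_mul, mul_pow]
    _ ≤ 1 := pow_le_one₀ (by positivity) ((div_le_one (by positivity)).2 hpN)
    _ ≤ #(linSolutions c A) := by
      exact_mod_cast (linSolutions_nonempty hsum (card_pos.1 hA_pos)).card_pos

end LinearEquationCount

theorem statement9 {k : ℕ} (hk : 3 ≤ k) (c : Fin k → ℤ) (hc : ∀ i, c i ≠ 0)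
    (hsum : ∑ i, c i = 0) :
    ∀ ε : ℝ, 0 < ε → ∃ δ : ℝ, 0 < δ ∧ ∀ p : ℕ, p.Prime → ∀ A : Finset (ZMod p),
      ε * p ≤ (A.card : ℝ) →
      δ * (p : ℝ) ^ (k - 1) ≤
        (Nat.card {x : Fin k → ZMod p // (∀ i, x i ∈ A) ∧ ∑ i, c i • x i = 0} : ℝ) := by
  intro ε hε
  obtain ⟨n, rfl⟩ : ∃ n, k = n + 3 := ⟨k - 3, by omega⟩
  obtain ⟨δ, hδ, h⟩ :=
    (LinearEquationCount.supersaturated c hc hsum).exists_forall_prime hsum hε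
  refine ⟨δ, hδ, fun p hp A hA => ?_⟩
  have := Fact.mk hp
  rw [Nat.card_eq_fintype_card, Fintype.card_subtype]
  exact h p A hA
end

section
/- Let p be a prime, A ⊆ F_p, k ≥ 1 an integer, Γ ⊆ F_p a finite set, ρ ∈ (0, 1], and let B = { x ∈ F_p : ‖ξx/p‖_{ℝ/ℤ} ≤ ρ for all ξ ∈ Γ }. If |A ∩ B| < k, then the chromatic number of Cay(F_p, A) is at most (2k − 1) · ⌈2/ρ⌉^{|Γ|}. -/
/-!
Cut the circle into `N = ⌈2/ρ⌉` arcs and colour `x ∈ 𝔽_p` by the vector recording which arc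
each `ξx/p` (`ξ ∈ Γ`) falls into. Two points of the same colour differ by an element of `B`, so
an edge of `Cay(𝔽_p, A)` inside one colour class is an edge of `Cay(𝔽_p, A ∩ B)`. The latter
graph has maximum degree at most `2|A ∩ B| ≤ 2k - 2`, hence a greedy `(2k - 1)`-colouring;
pairing the two colourings gives a proper colouring of `Cay(𝔽_p, A)` with
`(2k - 1) N ^ |Γ|` colours.
-/

/-- The Cayley graph `Cay(Γ, A)`: distinct `u, v` are adjacent iff
`v - u ∈ A` or `u - v ∈ A`. -/
def cayley {G : Type*} [AddCommGroup G] (A : Set G) : SimpleGraph G where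
  Adj u v := u ≠ v ∧ (v - u ∈ A ∨ u - v ∈ A)
  symm := ⟨fun _ _ h => ⟨h.1.symm, h.2.symm⟩⟩
  loopless := ⟨fun _ h => h.1 rfl⟩

/-- The distance from `x/p` (using the standard representative of `x ∈ F_p`)
to the nearest integer. -/
noncomputable def torusNorm (p : ℕ) (x : ZMod p) : ℝ :=
  |(x.val : ℝ) / p - round ((x.val : ℝ) / p)|

open Finset

namespace SimpleGraph

variable {V : Type*} {G : SimpleGraph V}

theorem colorable_of_forall_degree_le [Fintype V] [DecidableRel G.Adj] {d : ℕ}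
    (h : ∀ v, G.degree v ≤ d) : G.Colorable (d + 1) := by
  classical
  suffices ∀ s : Finset V, ∃ c : V → Fin (d + 1), ∀ u ∈ s, ∀ v ∈ s, G.Adj u v → c u ≠ c v by
    obtain ⟨c, hc⟩ := this univ
    exact ⟨Coloring.mk c fun huv => hc _ (mem_univ _) _ (mem_univ _) huv⟩
  intro s
  induction s using Finset.induction_on with
  | empty => exact ⟨fun _ => 0, by simp⟩
  | insert a s _ ih =>
    obtain ⟨c, hc⟩ := ih
    have hfree : #((G.neighborFinset a).image c) < #(univ : Finset (Fin (d + 1))) := by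
      rw [card_univ, Fintype.card_fin, Nat.lt_succ_iff]
      exact card_image_le.trans ((card_neighborFinset_eq_degree G a).trans_le (h a))
    obtain ⟨i, -, hi⟩ := exists_mem_notMem_of_card_lt_card hfree
    have hnew : ∀ v, G.Adj a v → i ≠ c v := fun v hav hiv =>
      hi (hiv ▸ mem_image_of_mem c ((mem_neighborFinset G a v).2 hav))
    refine ⟨Function.update c a i, fun u hu v hv huv => ?_⟩
    rcases eq_or_ne u a with rfl | hua
    · simpa [huv.ne'] using hnew v huv
    rcases eq_or_ne v a with rfl | hva
    · simpa [hua] using (hnew u huv.symm).symm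
    simpa [hua, hva] using hc u ((mem_insert.1 hu).resolve_left hua) v
      ((mem_insert.1 hv).resolve_left hva) huv

theorem Colorable.of_fiberwise {α : Type*} [Fintype α] {H : SimpleGraph V}
    {n : ℕ} (hH : H.Colorable n) (f : V → α) (hf : ∀ x y, G.Adj x y → f x = f y → H.Adj x y) :
    G.Colorable (Fintype.card α * n) := by
  obtain ⟨c⟩ := hH
  have := (Coloring.mk (G := G) (fun x => (f x, c x)) fun {x y} hxy hc =>
    c.valid (hf x y hxy (congrArg Prod.fst hc)) (congrArg Prod.snd hc)).colorable
  simpa using this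

end SimpleGraph

section Cayley

variable {G : Type*} [AddCommGroup G]

theorem cayley_adj_iff {A : Set G} {u v : G} :
    (cayley A).Adj u v ↔ u ≠ v ∧ (v - u ∈ A ∨ u - v ∈ A) := Iff.rfl

theorem degree_cayley_le [Fintype G] [DecidableEq G] (S : Finset G)
    [DecidableRel (cayley (S : Set G)).Adj] (v : G) : (cayley (S : Set G)).degree v ≤ 2 * #S := by
  have hsub : (cayley (S : Set G)).neighborFinset v ⊆ S.image (v - ·) ∪ S.image (v + ·) := by
    intro u hu
    rw [SimpleGraph.mem_neighborFinset, cayley_adj_iff] at hu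
    rcases hu.2 with h | h
    · exact mem_union_right _ (mem_image.2 ⟨u - v, h, by abel⟩)
    · exact mem_union_left _ (mem_image.2 ⟨v - u, h, by abel⟩)
  rw [← SimpleGraph.card_neighborFinset_eq_degree]
  calc _ ≤ #(S.image (v - ·) ∪ S.image (v + ·)) := card_le_card hsub
    _ ≤ #S + #S := (card_union_le _ _).trans (add_le_add card_image_le card_image_le)
    _ = 2 * #S := (two_mul _).symm

theorem cayley_colorable [Finite G] (S : Finset G) :
    (cayley (S : Set G)).Colorable (2 * #S + 1) := by
  classical
  cases nonempty_fintype G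
  exact SimpleGraph.colorable_of_forall_degree_le (degree_cayley_le S)

end Cayley

section TorusNorm

variable {p : ℕ} [NeZero p]

theorem torusNorm_sub_le (u v : ZMod p) : torusNorm p (u - v) ≤ |(u.val : ℝ) - v.val| / p := by
  set a : ℤ := u.val - v.val
  have hval : ((u - v).val : ℤ) = a - p * (a / p) := by
    rw [← Int.emod_def, ← ZMod.val_intCast]
    simp [a]
  have hp : (0 : ℝ) < p := by exact_mod_cast (NeZero.pos p)
  calc torusNorm p (u - v) ≤ |((u - v).val : ℝ) / p - (-(a / p) : ℤ)| := round_le _ _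
    _ = |(a : ℝ) / p| := by
      congr 1
      rw [show ((u - v).val : ℝ) = ((a - p * (a / p) : ℤ) : ℝ) by exact_mod_cast hval]
      push_cast
      field_simp
      ring
    _ = |(u.val : ℝ) - v.val| / p := by rw [abs_div, abs_of_pos hp]; simp [a]

-- `u` and `v` lie in the same box `[jp/N, (j+1)p/N)`.
theorem torusNorm_sub_mul_lt_one {N : ℕ} {u v : ZMod p} (h : u.val * N / p = v.val * N / p) :
    torusNorm p (u - v) * N < 1 := by
  have hu := Nat.div_add_mod (u.val * N) p
  rw [h] at hu
  have hv := Nat.div_add_mod (v.val * N) p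
  have hu' := Nat.mod_lt (u.val * N) (NeZero.pos p)
  have hv' := Nat.mod_lt (v.val * N) (NeZero.pos p)
  have h1 : (u.val : ℝ) * N < v.val * N + p := by
    exact_mod_cast (by omega : u.val * N < v.val * N + p)
  have h2 : (v.val : ℝ) * N < u.val * N + p := by
    exact_mod_cast (by omega : v.val * N < u.val * N + p)
  have hp : (0 : ℝ) < p := by exact_mod_cast (NeZero.pos p)
  have hdiff : |(u.val : ℝ) - v.val| * N < p := by
    rw [← abs_of_nonneg (Nat.cast_nonneg (α := ℝ) N), ← abs_mul, abs_lt]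
    constructor <;> linarith
  calc torusNorm p (u - v) * N ≤ |(u.val : ℝ) - v.val| / p * N :=
        mul_le_mul_of_nonneg_right (torusNorm_sub_le u v) (Nat.cast_nonneg N)
    _ < 1 := by rw [div_mul_eq_mul_div, div_lt_one hp]; exact hdiff

theorem exists_map_torusNorm_mul_sub_le (Γ : Finset (ZMod p)) {ρ : ℝ} (hρ : 0 < ρ) :
    ∃ f : ZMod p → Γ → Fin ⌈2 / ρ⌉₊,
      ∀ x y, f x = f y → ∀ ξ ∈ Γ, torusNorm p (ξ * (x - y)) ≤ ρ := by
  set N := ⌈2 / ρ⌉₊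
  have hρN : 2 ≤ ρ * N := (div_le_iff₀' hρ).1 (Nat.le_ceil _)
  have hN : 0 < N := Nat.ceil_pos.2 (by positivity)
  refine ⟨fun x ξ => ⟨(ξ * x : ZMod p).val * N / p,
    Nat.div_lt_of_lt_mul (Nat.mul_lt_mul_of_pos_right (ZMod.val_lt _) hN)⟩, ?_⟩
  intro x y hxy ξ hξ
  have hbox := torusNorm_sub_mul_lt_one (congrArg Fin.val (congrFun hxy ⟨ξ, hξ⟩))
  rw [mul_sub]
  exact (lt_of_mul_lt_mul_right (hbox.trans_le (by linarith)) (Nat.cast_nonneg N)).le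

end TorusNorm

theorem statement13_general (p : ℕ) [Fact p.Prime] (A : Finset (ZMod p)) (k : ℕ)
    (Γ : Finset (ZMod p)) (ρ : ℝ) (hρ0 : 0 < ρ)
    (B : Set (ZMod p)) (hB : B = {x | ∀ ξ ∈ Γ, torusNorm p (ξ * x) ≤ ρ})
    (hAB : ((A : Set (ZMod p)) ∩ B).ncard < k) :
    (cayley (A : Set (ZMod p))).chromaticNumber ≤
      (((2 * k - 1) * ⌈2 / ρ⌉₊ ^ Γ.card : ℕ) : ℕ∞) := by
  classical
  obtain ⟨f, hf⟩ := exists_map_torusNorm_mul_sub_le Γ hρ0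
  set S := A.filter (· ∈ B)
  have hS : #S < k := by
    rw [← Set.ncard_coe_finset, coe_filter]
    exact hAB
  have hadj : ∀ x y, (cayley (A : Set (ZMod p))).Adj x y → f x = f y →
      (cayley (S : Set (ZMod p))).Adj x y := by
    intro x y hxy hfxy
    have hxy_B : x - y ∈ B := hB ▸ hf x y hfxy
    have hyx_B : y - x ∈ B := hB ▸ hf y x hfxy.symm
    rw [cayley_adj_iff] at hxy ⊢
    simp only [S, coe_filter]
    exact ⟨hxy.1, hxy.2.imp (⟨·, hyx_B⟩) (⟨·, hxy_B⟩)⟩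
  have hcol :=
    ((cayley_colorable S).mono (by omega : 2 * #S + 1 ≤ 2 * k - 1)).of_fiberwise f hadj
  simpa [mul_comm] using hcol.chromaticNumber_le

theorem statement13 (p : ℕ) [Fact p.Prime] (A : Finset (ZMod p)) (k : ℕ) (hk : 1 ≤ k)
    (Γ : Finset (ZMod p)) (ρ : ℝ) (hρ0 : 0 < ρ) (hρ1 : ρ ≤ 1)
    (B : Set (ZMod p)) (hB : B = {x | ∀ ξ ∈ Γ, torusNorm p (ξ * x) ≤ ρ})
    (hAB : ((A : Set (ZMod p)) ∩ B).ncard < k) :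
    (cayley (A : Set (ZMod p))).chromaticNumber ≤
      (((2 * k - 1) * ⌈2 / ρ⌉₊ ^ Γ.card : ℕ) : ℕ∞) :=
  statement13_general p A k Γ ρ hρ0 B hB hAB
end

section
/- Let p be a prime and let n, k be integers with n ≥ pk and k ≥ 2. Let A = (A_1, ..., A_{p−1}) and B = (B_1, ..., B_{p−1}) be vertices of the generalized Kneser graph KN(n, k, p−1) satisfying condition (A1), i.e. (A_1 ∪ ... ∪ A_i) ∩ (B_i ∪ ... ∪ B_{p−1}) = ∅ for all i ∈ {1, ..., p−1}. Set A_0 = {1,...,n} \ (A_1 ∪ ... ∪ A_{p−1}) and B_0 = {1,...,n} \ (B_1 ∪ ... ∪ B_{p−1}). Then |A_0 ∩ B_{p−1}| = k, and |A_i ∩ B_{i−1}| ≥ (p+1)k − n for all i ∈ {1, ..., p−1}. -/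
theorem statement15 (p n k : ℕ) (hp : p.Prime) (hk : 2 ≤ k) (hn : p * k ≤ n)
    (A B : ℕ → Finset (Fin n))
    (hAcard : ∀ i ∈ Finset.Icc 1 (p - 1), (A i).card = k)
    (hBcard : ∀ i ∈ Finset.Icc 1 (p - 1), (B i).card = k)
    (hAdisj : ∀ i ∈ Finset.Icc 1 (p - 1), ∀ j ∈ Finset.Icc 1 (p - 1),
      i ≠ j → Disjoint (A i) (A j))
    (hBdisj : ∀ i ∈ Finset.Icc 1 (p - 1), ∀ j ∈ Finset.Icc 1 (p - 1),
      i ≠ j → Disjoint (B i) (B j))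
    (hA1 : ∀ i ∈ Finset.Icc 1 (p - 1),
      Disjoint ((Finset.Icc 1 i).biUnion A) ((Finset.Icc i (p - 1)).biUnion B)) :
    letI A₀ : Finset (Fin n) := Finset.univ \ (Finset.Icc 1 (p - 1)).biUnion A
    letI B₀ : Finset (Fin n) := Finset.univ \ (Finset.Icc 1 (p - 1)).biUnion B
    (A₀ ∩ B (p - 1)).card = k ∧
    ∀ i ∈ Finset.Icc 1 (p - 1),
      ((p : ℤ) + 1) * k - n ≤ ((A i ∩ (if i = 1 then B₀ else B (i - 1))).card : ℤ) := by
  set A₀ : Finset (Fin n) := Finset.univ \ (Finset.Icc 1 (p - 1)).biUnion A with hA0def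
  set B₀ : Finset (Fin n) := Finset.univ \ (Finset.Icc 1 (p - 1)).biUnion B with hB0def
  have hp2 : 2 ≤ p := hp.two_le
  have hq1 : (1:ℕ) ≤ p - 1 := by omega
  have hmemq : p - 1 ∈ Finset.Icc 1 (p - 1) := Finset.mem_Icc.mpr ⟨hq1, le_refl _⟩
  constructor
  · -- |A₀ ∩ B_{p-1}| = k
    have hd := hA1 (p - 1) hmemq
    have hsub : B (p - 1) ⊆ (Finset.Icc (p - 1) (p - 1)).biUnion B :=
      Finset.subset_biUnion_of_mem B (Finset.mem_Icc.mpr ⟨le_refl _, le_refl _⟩)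
    have hd2 : Disjoint ((Finset.Icc 1 (p - 1)).biUnion A) (B (p - 1)) :=
      hd.mono_right hsub
    have heq : A₀ ∩ B (p - 1) = B (p - 1) := by
      apply Finset.inter_eq_right.mpr
      intro x hx
      simp only [hA0def, Finset.mem_sdiff, Finset.mem_univ, true_and]
      exact Finset.disjoint_right.mp hd2 hx
    rw [heq]
    exact hBcard _ hmemq
  · intro i hi
    obtain ⟨hi1, hi2⟩ := Finset.mem_Icc.mp hi
    have hnz : (p:ℤ) * k ≤ (n:ℤ) := by exact_mod_cast hn
    by_cases h1 : i = 1
    · subst h1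
      rw [if_pos rfl]
      have hd := hA1 1 hi
      have hU : (Finset.Icc 1 1).biUnion A = A 1 := by simp
      rw [hU] at hd
      have heq : A 1 ∩ B₀ = A 1 := by
        apply Finset.inter_eq_left.mpr
        intro x hx
        simp only [hB0def, Finset.mem_sdiff, Finset.mem_univ, true_and]
        exact Finset.disjoint_left.mp hd hx
      rw [heq, hAcard 1 hi]
      push_cast
      linarith
    · simp only [if_neg h1]
      have hi2' : 2 ≤ i := by omega
      have hmemi : i - 1 ∈ Finset.Icc 1 (p - 1) := Finset.mem_Icc.mpr ⟨by omega, by omega⟩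
      set T1 : Finset (Fin n) := (Finset.Icc 1 (i - 1)).biUnion A with hT1
      set T2 : Finset (Fin n) := (Finset.Icc i (p - 1)).biUnion B with hT2
      -- disjointness facts
      have hAiT1 : Disjoint (A i) T1 := by
        rw [hT1, Finset.disjoint_biUnion_right]
        intro j hj
        obtain ⟨hj1, hj2⟩ := Finset.mem_Icc.mp hj
        exact hAdisj i hi j (Finset.mem_Icc.mpr ⟨hj1, by omega⟩) (by omega)
      have hAiT2 : Disjoint (A i) T2 := by
        have := hA1 i hi
        exact this.mono_left (Finset.subset_biUnion_of_mem A (Finset.mem_Icc.mpr ⟨hi1, le_refl _⟩))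
      have hd1 := hA1 (i - 1) hmemi
      have hBT1 : Disjoint (B (i - 1)) T1 := by
        have : Disjoint T1 (B (i - 1)) :=
          hd1.mono_right (Finset.subset_biUnion_of_mem B
            (Finset.mem_Icc.mpr ⟨le_refl _, by omega⟩))
        exact this.symm
      have hBT2 : Disjoint (B (i - 1)) T2 := by
        rw [hT2, Finset.disjoint_biUnion_right]
        intro j hj
        obtain ⟨hj1, hj2⟩ := Finset.mem_Icc.mp hj
        exact hBdisj (i - 1) hmemi j (Finset.mem_Icc.mpr ⟨by omega, hj2⟩) (by omega)
      have hT1T2 : Disjoint T1 T2 := by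
        refine hd1.mono_right ?_
        apply Finset.biUnion_subset_biUnion_of_subset_left
        intro j hj
        obtain ⟨hj1, hj2⟩ := Finset.mem_Icc.mp hj
        exact Finset.mem_Icc.mpr ⟨by omega, hj2⟩
      -- cardinalities
      have hT1card : T1.card = (i - 1) * k := by
        rw [hT1, Finset.card_biUnion]
        · rw [Finset.sum_congr rfl (fun j hj => by
            obtain ⟨hj1, hj2⟩ := Finset.mem_Icc.mp hj
            exact hAcard j (Finset.mem_Icc.mpr ⟨hj1, by omega⟩))]
          rw [Finset.sum_const, Nat.card_Icc, smul_eq_mul]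
          have h' : i - 1 + 1 - 1 = i - 1 := by omega
          rw [h']
        · intro x hx y hy hxy
          obtain ⟨hx1, hx2⟩ := Finset.mem_Icc.mp hx
          obtain ⟨hy1, hy2⟩ := Finset.mem_Icc.mp hy
          exact hAdisj x (Finset.mem_Icc.mpr ⟨hx1, by omega⟩)
            y (Finset.mem_Icc.mpr ⟨hy1, by omega⟩) hxy
      have hT2card : T2.card = (p - i) * k := by
        rw [hT2, Finset.card_biUnion]
        · rw [Finset.sum_congr rfl (fun j hj => by
            obtain ⟨hj1, hj2⟩ := Finset.mem_Icc.mp hj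
            exact hBcard j (Finset.mem_Icc.mpr ⟨by omega, hj2⟩))]
          rw [Finset.sum_const, Nat.card_Icc, smul_eq_mul]
          have h' : p - 1 + 1 - i = p - i := by omega
          rw [h']
        · intro x hx y hy hxy
          obtain ⟨hx1, hx2⟩ := Finset.mem_Icc.mp hx
          obtain ⟨hy1, hy2⟩ := Finset.mem_Icc.mp hy
          exact hBdisj x (Finset.mem_Icc.mpr ⟨by omega, hx2⟩)
            y (Finset.mem_Icc.mpr ⟨by omega, hy2⟩) hxy
      have hAicard : (A i).card = k := hAcard i hi
      have hBicard : (B (i - 1)).card = k := hBcard _ hmemi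
      -- card of the big union ≤ n
      have hUT1 : Disjoint (A i ∪ B (i - 1)) T1 := Finset.disjoint_union_left.mpr ⟨hAiT1, hBT1⟩
      have hUT2 : Disjoint (A i ∪ B (i - 1)) T2 := Finset.disjoint_union_left.mpr ⟨hAiT2, hBT2⟩
      have hbig : (A i ∪ B (i - 1)).card + T1.card + T2.card ≤ n := by
        have h1 : ((A i ∪ B (i - 1)) ∪ T1 ∪ T2).card =
            (A i ∪ B (i - 1)).card + T1.card + T2.card := by
          rw [Finset.card_union_of_disjoint, Finset.card_union_of_disjoint hUT1]
          exact Finset.disjoint_union_left.mpr ⟨hUT2, hT1T2⟩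
        calc (A i ∪ B (i - 1)).card + T1.card + T2.card
            = ((A i ∪ B (i - 1)) ∪ T1 ∪ T2).card := h1.symm
          _ ≤ (Finset.univ : Finset (Fin n)).card := Finset.card_le_card (Finset.subset_univ _)
          _ = n := by simp
      have hiu : (A i ∩ B (i - 1)).card + (A i ∪ B (i - 1)).card = k + k := by
        rw [Finset.card_inter_add_card_union, hAicard, hBicard]
      -- combine in ℕ then cast
      have hnat : (p + 1) * k ≤ (A i ∩ B (i - 1)).card + n := by
        have key : (p + 1) * k = 2 * k + ((i - 1) * k + (p - i) * k) := by
          have : (i - 1) + (p - i) = p - 1 := by omega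
          rw [← add_mul, this, ← add_mul]
          congr 1
          omega
        rw [hT1card, hT2card] at hbig
        omega
      have : ((p + 1) * k : ℤ) ≤ ((A i ∩ B (i - 1)).card : ℤ) + n := by exact_mod_cast hnat
      push_cast at this
      linarith
end

section
/- Let p be a prime and let n, k be integers with n ≥ pk and k ≥ 2. For a vertex A = (A_1, ..., A_{p−1}) of the generalized Kneser graph KN(n, k, p−1), define x_A ∈ (ℤ/pℤ)^n by x_A = 1·𝟙_{A_1} + 2·𝟙_{A_2} + ... + (p−1)·𝟙_{A_{p−1}}. If A and B are adjacent vertices of KN(n, k, p−1), then min( d(x_A − x_B, 𝟏), d(x_B − x_A, 𝟏) ) ≤ pn − p²k, where d denotes Hamming distance in (ℤ/pℤ)^n and 𝟏 is the all-ones vector. In particular, the map A ↦ x_A is an injective graph homomorphism from KN(n, k, p−1) into Cay((ℤ/pℤ)^n, S) where S = { x : d(x, 𝟏) ≤ pn − p²k }. -/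
/-- Vertices of the generalized Kneser graph `KN(n, k, m)`: `m`-tuples of pairwise
disjoint `k`-element subsets of `{1, ..., n}`. -/
def KNVert (n k m : ℕ) : Type :=
  {A : Fin m → Finset (Fin n) //
    (∀ i, (A i).card = k) ∧ ∀ i j, i ≠ j → Disjoint (A i) (A j)}

/-- Condition (A1): every cumulative prefix of `A` is disjoint from the
complementary suffix of `B`. -/
def CondA1 {n m : ℕ} (A B : Fin m → Finset (Fin n)) : Prop :=
  ∀ i : Fin m, Disjoint ((Finset.Iic i).biUnion A) ((Finset.Ici i).biUnion B)

/-- The generalized Kneser graph `KN(n, k, m)`. -/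
def KN (n k m : ℕ) : SimpleGraph (KNVert n k m) where
  Adj X Y := X ≠ Y ∧ (CondA1 X.1 Y.1 ∨ CondA1 Y.1 X.1)
  symm := ⟨fun _ _ h => ⟨h.1.symm, h.2.symm⟩⟩
  loopless := ⟨fun _ h => h.1 rfl⟩

/-- The vector `x_A = 1·𝟙_{A_1} + 2·𝟙_{A_2} + ... + (p−1)·𝟙_{A_{p−1}} ∈ (ℤ/pℤ)^n`
associated to a vertex `A = (A_1, ..., A_{p−1})` of `KN(n, k, p−1)`. -/
def xVec (p n k : ℕ) (X : KNVert n k (p - 1)) : Fin n → ZMod p :=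
  fun j => ∑ i : Fin (p - 1), if j ∈ X.1 i then (((i : ℕ) + 1 : ℕ) : ZMod p) else 0

/-!
Let `a_j, b_j ∈ {0, …, p - 1}` be the integer lifts of `x_A` and `x_B`. Condition (A1) forces
`b_j < a_j` whenever both are nonzero, so `b_j ≤ (a_j - 1) mod p` at every coordinate, with
equality exactly where `(x_A - x_B)_j = 1`. Hence `d(x_A - x_B, 𝟏) ≤ ∑_j ((a_j - 1) mod p - b_j)`.
Since `∑ a_j = ∑ b_j = k (1 + ⋯ + (p - 1))` and `a_j = 0` at exactly `n - (p - 1) k` coordinates,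
that sum is `p (n - (p - 1) k) - n`, which is at most `p n - p² k` because `p k ≤ n`.
-/

open Finset

namespace ZMod

variable {p : ℕ} [NeZero p]

lemma val_sub_one_add_one (x : ZMod p) :
    (x - 1).val + 1 = x.val + if x = 0 then p else 0 := by
  obtain ⟨q, rfl⟩ : ∃ q, p = q + 1 := Nat.exists_eq_succ_of_ne_zero (NeZero.ne p)
  split_ifs with hx
  · simp [hx, val_neg_one]
  · have hx0 : x.val ≠ 0 := (val_ne_zero x).2 hx
    have hq : 1 % (q + 1) = 1 := Nat.mod_eq_of_lt (by have := x.val_lt; omega)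
    rw [val_sub (by rw [val_one_eq_one_mod, hq]; omega), val_one_eq_one_mod, hq]
    omega

lemma sum_val_sub_one_add_card {ι : Type*} [Fintype ι] (f : ι → ZMod p) :
    ∑ i, (f i - 1).val + Fintype.card ι = ∑ i, (f i).val + p * #{i | f i = 0} := by
  rw [card_filter, mul_sum, ← sum_add_distrib, Fintype.card_eq_sum_ones, ← sum_add_distrib]
  exact sum_congr rfl fun i _ => by rw [val_sub_one_add_one]; split_ifs <;> simp

lemma hammingDist_sub_one_add_sum_val_le {ι : Type*} [Fintype ι] (f g : ι → ZMod p)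
    (h : ∀ i, (g i).val ≤ (f i - 1).val) :
    hammingDist (f - g) 1 + ∑ i, (g i).val ≤ ∑ i, (f i - 1).val := by
  rw [hammingDist, card_filter, ← sum_add_distrib]
  refine sum_le_sum fun i _ => ?_
  split_ifs with hi
  · have hne : (g i).val ≠ (f i - 1).val := fun he => hi (by
      rw [Pi.sub_apply, val_injective _ he, Pi.one_apply]; ring)
    have := h i
    omega
  · simpa using h i

end ZMod

namespace KNVert

variable {n k m : ℕ}

def level (X : KNVert n k m) (j : Fin n) : ℕ :=
  ∑ i : Fin m, if j ∈ X.1 i then (i : ℕ) + 1 else 0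

lemma level_eq_of_mem (X : KNVert n k m) {j : Fin n} {i : Fin m} (h : j ∈ X.1 i) :
    X.level j = i + 1 := by
  rw [level, sum_eq_single i (fun i' _ hi' => if_neg (disjoint_left.1 (X.2.2 i' i hi') · h))
    (by simp), if_pos h]

lemma level_eq_zero_iff (X : KNVert n k m) {j : Fin n} : X.level j = 0 ↔ ∀ i, j ∉ X.1 i := by
  simp [level, sum_eq_zero_iff]

lemma level_le (X : KNVert n k m) (j : Fin n) : X.level j ≤ m := by
  by_cases h : ∃ i, j ∈ X.1 i
  · obtain ⟨i, hi⟩ := h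
    rw [X.level_eq_of_mem hi]
    exact i.isLt
  · rw [X.level_eq_zero_iff.2 (not_exists.1 h)]
    exact m.zero_le

lemma mem_iff_level_eq (X : KNVert n k m) {j : Fin n} {i : Fin m} :
    j ∈ X.1 i ↔ X.level j = i + 1 := by
  refine ⟨X.level_eq_of_mem, fun h => ?_⟩
  by_cases hj : ∃ i', j ∈ X.1 i'
  · obtain ⟨i', hi'⟩ := hj
    obtain rfl : i' = i := Fin.ext (by have := X.level_eq_of_mem hi'; omega)
    exact hi'
  · have := X.level_eq_zero_iff.2 (not_exists.1 hj)
    omega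

lemma sum_level (X : KNVert n k m) : ∑ j, X.level j = k * ∑ i : Fin m, ((i : ℕ) + 1) := by
  simp only [level]
  rw [sum_comm, mul_sum]
  exact sum_congr rfl fun i _ => by rw [sum_ite_mem, univ_inter, sum_const, X.2.1 i, smul_eq_mul]

lemma card_level_eq_zero_add (X : KNVert n k m) : #{j | X.level j = 0} + m * k = n := by
  have hzero : ({j | X.level j = 0} : Finset (Fin n)) = (univ.biUnion X.1)ᶜ := by
    ext j
    simp [X.level_eq_zero_iff]
  have hcard : #(univ.biUnion X.1) = m * k := by
    rw [card_biUnion fun i _ i' _ => X.2.2 i i']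
    simp [X.2.1]
  rw [hzero, ← hcard, card_compl_add_card, Fintype.card_fin]

lemma level_lt_of_condA1 {X Y : KNVert n k m} (h : CondA1 X.1 Y.1) {j : Fin n}
    (hX : X.level j ≠ 0) (hY : Y.level j ≠ 0) : Y.level j < X.level j := by
  obtain ⟨i, hi⟩ : ∃ i, j ∈ X.1 i := by simpa [X.level_eq_zero_iff] using hX
  obtain ⟨i', hi'⟩ : ∃ i', j ∈ Y.1 i' := by simpa [Y.level_eq_zero_iff] using hY
  rw [X.level_eq_of_mem hi, Y.level_eq_of_mem hi']
  by_contra! hle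
  exact disjoint_left.1 (h i) (mem_biUnion.2 ⟨i, mem_Iic.2 le_rfl, hi⟩)
    (mem_biUnion.2 ⟨i', mem_Ici.2 (Fin.le_def.2 (by omega)), hi'⟩)

end KNVert

lemma xVec_apply {p n k : ℕ} (X : KNVert n k (p - 1)) (j : Fin n) :
    xVec p n k X j = X.level j := by
  simp [xVec, KNVert.level, apply_ite (Nat.cast : ℕ → ZMod p)]

section xVec

variable {p n k : ℕ} [NeZero p]

lemma val_xVec (X : KNVert n k (p - 1)) (j : Fin n) : (xVec p n k X j).val = X.level j := by
  rw [xVec_apply, ZMod.val_cast_of_lt]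
  have := X.level_le j
  have := NeZero.pos p
  omega

lemma xVec_injective : Function.Injective (xVec p n k) := by
  intro X Y h
  have hlevel : X.level = Y.level := funext fun j => by rw [← val_xVec, ← val_xVec, h]
  exact Subtype.ext <| funext fun i => Finset.ext fun j => by
    rw [X.mem_iff_level_eq, Y.mem_iff_level_eq, hlevel]

lemma val_xVec_le_val_xVec_sub_one {X Y : KNVert n k (p - 1)} (h : CondA1 X.1 Y.1) (j : Fin n) :
    (xVec p n k Y j).val ≤ (xVec p n k X j - 1).val := by
  have hsub := ZMod.val_sub_one_add_one (xVec p n k X j)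
  simp only [← ZMod.val_eq_zero, val_xVec] at hsub
  rw [val_xVec]
  have := Y.level_le j
  by_cases hX : X.level j = 0
  · rw [if_pos hX] at hsub
    omega
  · have hlt : Y.level j ≠ 0 → Y.level j < X.level j := X.level_lt_of_condA1 h hX
    rw [if_neg hX] at hsub
    omega

lemma hammingDist_xVec_sub_le (hn : p * k ≤ n) {X Y : KNVert n k (p - 1)}
    (h : CondA1 X.1 Y.1) :
    hammingDist (xVec p n k X - xVec p n k Y) 1 ≤ p * n - p ^ 2 * k := by
  have hdist := ZMod.hammingDist_sub_one_add_sum_val_le _ _ (val_xVec_le_val_xVec_sub_one h)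
  have hsum := ZMod.sum_val_sub_one_add_card (xVec p n k X)
  have hzero : #{j | xVec p n k X j = 0} + (p - 1) * k = n := by
    simpa only [← ZMod.val_eq_zero, val_xVec] using X.card_level_eq_zero_add
  simp only [val_xVec, X.sum_level, Y.sum_level, Fintype.card_fin] at hdist hsum
  obtain ⟨q, rfl⟩ : ∃ q, p = q + 1 := Nat.exists_eq_succ_of_ne_zero (NeZero.ne p)
  rw [Nat.add_sub_cancel] at hzero
  apply Nat.le_sub_of_add_le
  nlinarith

end xVec

theorem statement16_general (p n k : ℕ) (hp : p.Prime) (hn : p * k ≤ n) :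
    (∀ X Y : KNVert n k (p - 1), (KN n k (p - 1)).Adj X Y →
      min (hammingDist (xVec p n k X - xVec p n k Y) (1 : Fin n → ZMod p))
          (hammingDist (xVec p n k Y - xVec p n k X) (1 : Fin n → ZMod p)) ≤
        p * n - p ^ 2 * k) ∧
    Function.Injective (xVec p n k) ∧
    (∀ X Y : KNVert n k (p - 1), (KN n k (p - 1)).Adj X Y →
      (cayley {x : Fin n → ZMod p |
        hammingDist x (1 : Fin n → ZMod p) ≤ p * n - p ^ 2 * k}).Adj
          (xVec p n k X) (xVec p n k Y)) := by
  have : NeZero p := ⟨hp.ne_zero⟩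
  have hdist : ∀ X Y : KNVert n k (p - 1), (KN n k (p - 1)).Adj X Y →
      hammingDist (xVec p n k X - xVec p n k Y) 1 ≤ p * n - p ^ 2 * k ∨
        hammingDist (xVec p n k Y - xVec p n k X) 1 ≤ p * n - p ^ 2 * k :=
    fun X Y hXY => hXY.2.imp (hammingDist_xVec_sub_le hn) (hammingDist_xVec_sub_le hn)
  exact ⟨fun X Y hXY => min_le_iff.2 (hdist X Y hXY), xVec_injective,
    fun X Y hXY => ⟨fun h => hXY.1 (xVec_injective h), (hdist X Y hXY).symm⟩⟩

theorem statement16 (p n k : ℕ) (hp : p.Prime) (hk : 2 ≤ k) (hn : p * k ≤ n) :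
    (∀ X Y : KNVert n k (p - 1), (KN n k (p - 1)).Adj X Y →
      min (hammingDist (xVec p n k X - xVec p n k Y) (1 : Fin n → ZMod p))
          (hammingDist (xVec p n k Y - xVec p n k X) (1 : Fin n → ZMod p)) ≤
        p * n - p ^ 2 * k) ∧
    Function.Injective (xVec p n k) ∧
    (∀ X Y : KNVert n k (p - 1), (KN n k (p - 1)).Adj X Y →
      (cayley {x : Fin n → ZMod p |
        hammingDist x (1 : Fin n → ZMod p) ≤ p * n - p ^ 2 * k}).Adj
          (xVec p n k X) (xVec p n k Y)) :=
  statement16_general p n k hp hn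
end

section
/- For every integer d ≥ 0 and every α > 0 there exists a constant C = C(d, α) such that the following holds. Let Γ be a finite abelian group and let A ⊆ Γ with |A| ≥ α|Γ|. Suppose the set family { x − A : x ∈ Γ } of translates of −A has VC dimension at most d. Then there exists a set T ⊆ Γ with |T| ≤ C such that A + T = Γ (i.e. A is syndetic with at most C translates covering Γ). -/
open Finset

section Counting
variable {m : ℕ} {X : Type*} [Fintype X] [DecidableEq X]

/-- Count functions with constrained coordinates on a set `s`. -/
lemma count_constrained (s : Finset (Fin m)) (P : Fin m → Finset X) :
    #(univ.filter fun T : Fin m → X => ∀ i ∈ s, T i ∈ P i)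
      = (∏ i ∈ s, #(P i)) * (Fintype.card X) ^ (m - #s) := by
  have h1 : (univ.filter fun T : Fin m → X => ∀ i ∈ s, T i ∈ P i)
      = Fintype.piFinset (fun i => if i ∈ s then P i else univ) := by
    ext T
    simp only [mem_filter, mem_univ, true_and, Fintype.mem_piFinset]
    constructor
    · intro h i
      by_cases hi : i ∈ s <;> simp [hi, h]
    · intro h i hi
      have := h i; simp [hi] at this; exact this
  rw [h1, Fintype.card_piFinset]
  rw [← Finset.prod_mul_prod_compl s]
  congr 1
  · exact Finset.prod_congr rfl (fun i hi => by simp [hi])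
  · rw [Finset.prod_congr rfl (fun i hi => show #(if i ∈ s then P i else univ) = Fintype.card X by
        simp only [mem_compl] at hi; simp [hi, card_univ]), Finset.prod_const, card_compl,
      Fintype.card_fin]

/-- Single coordinate constraint. -/
lemma count_one (i : Fin m) (B : Finset X) :
    #(univ.filter fun T : Fin m → X => T i ∈ B) = #B * (Fintype.card X) ^ (m - 1) := by
  have := count_constrained {i} (fun _ => B)
  simpa using this

/-- Two distinct coordinates. -/
lemma count_two {i j : Fin m} (hij : i ≠ j) (B : Finset X) :
    #(univ.filter fun T : Fin m → X => T i ∈ B ∧ T j ∈ B)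
      = #B * #B * (Fintype.card X) ^ (m - 2) := by
  have := count_constrained {i, j} (fun _ => B)
  rw [show (univ.filter fun T : Fin m → X => T i ∈ B ∧ T j ∈ B)
      = (univ.filter fun T : Fin m → X => ∀ l ∈ ({i, j} : Finset (Fin m)), T l ∈ B) by
    ext T; simp [forall_eq_or_imp]] 
  rw [this, Finset.prod_pair hij, card_insert_of_notMem (by simp [hij]), card_singleton]

/-- Functions into Bool with forced values on `D`. -/
lemma count_forced (D : Finset (Fin m)) (b : Fin m → Bool) :
    #(univ.filter fun I : Fin m → Bool => ∀ i ∈ D, I i = b i) = 2 ^ (m - #D) := by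
  have := count_constrained D (fun i => ({b i} : Finset Bool))
  simpa using this

end Counting

section Cheb
variable {m : ℕ} {X : Type*} [Fintype X] [DecidableEq X]

/-- number of coordinates hitting B -/
def hits (B : Finset X) (T : Fin m → X) : ℕ := #(univ.filter fun i => T i ∈ B)

lemma sum_hits (B : Finset X) :
    ∑ T : Fin m → X, hits B T = m * (#B * (Fintype.card X) ^ (m - 1)) := by
  have : ∀ T : Fin m → X, hits B T = ∑ i : Fin m, if T i ∈ B then 1 else 0 := fun T =>
    Finset.card_filter _ _
  simp only [this]
  rw [Finset.sum_comm]
  have : ∀ i : Fin m, (∑ T : Fin m → X, if T i ∈ B then 1 else 0)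
      = #B * (Fintype.card X) ^ (m - 1) := fun i => by
    rw [← count_one i B]; exact (Finset.card_filter _ _).symm
  simp only [this, Finset.sum_const, card_univ, Fintype.card_fin, smul_eq_mul]

lemma sum_hits_sq (B : Finset X) :
    ∑ T : Fin m → X, (hits B T) * (hits B T)
      = m * (#B * (Fintype.card X) ^ (m - 1))
        + m * (m - 1) * (#B * #B * (Fintype.card X) ^ (m - 2)) := by
  have hh : ∀ T : Fin m → X, hits B T * hits B T
      = ∑ i : Fin m, ∑ j : Fin m, if T i ∈ B ∧ T j ∈ B then 1 else 0 := by
    intro T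
    rw [show hits B T = ∑ i : Fin m, if T i ∈ B then 1 else 0 from Finset.card_filter _ _]
    rw [Finset.sum_mul_sum]
    congr 1; funext i; congr 1; funext j
    by_cases h1 : T i ∈ B <;> by_cases h2 : T j ∈ B <;> simp [h1, h2]
  simp only [hh]
  rw [Finset.sum_comm]
  have inner : ∀ i : Fin m, ∑ T : Fin m → X, ∑ j : Fin m, (if T i ∈ B ∧ T j ∈ B then 1 else 0)
      = #B * (Fintype.card X) ^ (m - 1) + (m-1) * (#B * #B * (Fintype.card X) ^ (m - 2)) := by
    intro i
    rw [Finset.sum_comm]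
    rw [← Finset.add_sum_erase _ _ (mem_univ i)]
    congr 1
    · rw [show (∑ T : Fin m → X, if T i ∈ B ∧ T i ∈ B then 1 else 0)
          = #(univ.filter fun T : Fin m → X => T i ∈ B) by
        rw [Finset.card_filter]; congr 1; funext T; by_cases h : T i ∈ B <;> simp [h]]
      exact count_one i B
    · rw [Finset.sum_congr rfl (fun j hj => ?_), Finset.sum_const, card_erase_of_mem (mem_univ i),
        card_univ, Fintype.card_fin, smul_eq_mul]
      have hji : j ≠ i := (Finset.mem_erase.1 hj).1
      rw [show (∑ T : Fin m → X, if T i ∈ B ∧ T j ∈ B then 1 else 0)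
          = #(univ.filter fun T : Fin m → X => T i ∈ B ∧ T j ∈ B) from
        (Finset.card_filter _ _).symm]
      exact count_two (Ne.symm hji) B
  simp only [inner]
  rw [Finset.sum_add_distrib]
  simp [Finset.sum_const, card_univ, mul_add, mul_assoc]

end Cheb

section ChebR
variable {X : Type*} [Fintype X] [DecidableEq X]

lemma cheb_var (B : Finset X) (m' : ℕ) :
    ∑ T : Fin (m'+2) → X, ((Fintype.card X : ℝ) * hits B T - ((m'+2 : ℕ) : ℝ) * #B)^2
      = (Fintype.card X : ℝ)^(m'+2) * ((m'+2 : ℕ) : ℝ) * #B * (Fintype.card X - #B) := by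
  have h1 := sum_hits (m := m'+2) B
  have h2 := sum_hits_sq (m := m'+2) B
  rw [show m'+2-1 = m'+1 from rfl] at h1
  rw [show m'+2-1 = m'+1 from rfl, show m'+2-2 = m' from rfl] at h2
  have expand : ∀ T : Fin (m'+2) → X, ((Fintype.card X : ℝ) * hits B T - ((m'+2:ℕ):ℝ) * #B)^2
      = (Fintype.card X:ℝ)^2 * (hits B T * hits B T)
        - 2*(Fintype.card X:ℝ)*((m'+2:ℕ):ℝ)*(#B:ℝ)*(hits B T)
        + ((m'+2:ℕ):ℝ)^2*(#B:ℝ)^2 := by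
    intro T; push_cast; ring
  rw [Finset.sum_congr rfl (fun T _ => expand T)]
  rw [Finset.sum_add_distrib, Finset.sum_sub_distrib, ← Finset.mul_sum, ← Finset.mul_sum,
    Finset.sum_const, card_univ, Fintype.card_fun, Fintype.card_fin, nsmul_eq_mul]
  rw [show ∑ T : Fin (m'+2) → X, ((hits B T : ℝ) * hits B T) = ((∑ T : Fin (m'+2) → X,
      (hits B T * hits B T) : ℕ) : ℝ) by push_cast; rfl]
  rw [show ∑ T : Fin (m'+2) → X, ((hits B T : ℝ)) = ((∑ T : Fin (m'+2) → X, hits B T : ℕ) : ℝ) by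
    push_cast; rfl]
  rw [h1, h2]
  push_cast
  ring

lemma cheb (B : Finset X) (α : ℝ) (hα : 0 < α) (m' : ℕ)
    (hB : α * (Fintype.card X : ℝ) ≤ (#B : ℝ)) (hm : 8 ≤ α * ((m' + 2 : ℕ) : ℝ)) :
    2 * #(univ.filter fun T : Fin (m'+2) → X =>
        hits B T < ⌈α * ((m' + 2 : ℕ) : ℝ) / 4⌉₊)
      ≤ (Fintype.card X) ^ (m' + 2) := by
  rcases Nat.eq_zero_or_pos (Fintype.card X) with h0 | hn0
  · haveI : IsEmpty X := Fintype.card_eq_zero_iff.mp h0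
    haveI : IsEmpty (Fin (m'+2) → X) := ⟨fun f => IsEmpty.false (f 0)⟩
    simp [Finset.univ_eq_empty]
  set m : ℕ := m' + 2 with hmdef
  set k : ℕ := ⌈α * (m : ℝ) / 4⌉₊ with hk
  have hm0 : (0:ℝ) < (m:ℝ) := by positivity
  have hnR : (0:ℝ) < (Fintype.card X : ℝ) := by exact_mod_cast hn0
  have hb0 : (0:ℝ) < (#B : ℝ) := lt_of_lt_of_le (by positivity) hB
  have hbn : ((#B:ℕ):ℝ) ≤ (Fintype.card X : ℝ) := by
    exact_mod_cast (card_le_card (subset_univ B)).trans_eq card_univ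
  have key : ∀ T : Fin m → X, hits B T < k →
      ((m:ℝ) * #B / 2)^2 ≤ ((Fintype.card X : ℝ) * hits B T - (m:ℝ) * #B)^2 := by
    intro T hT
    have hX : ((hits B T : ℝ)) ≤ (k : ℝ) - 1 := by
      have h' : hits B T + 1 ≤ k := hT
      have := (Nat.cast_le (α := ℝ)).2 h'
      push_cast at this; linarith
    have hk1 : (k : ℝ) < α * m / 4 + 1 := Nat.ceil_lt_add_one (by positivity)
    have h1 : (Fintype.card X:ℝ) * hits B T ≤ (Fintype.card X:ℝ) * ((k:ℝ) - 1) :=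
      mul_le_mul_of_nonneg_left hX (by positivity)
    have h2 : (Fintype.card X:ℝ) * ((k:ℝ)-1) < (Fintype.card X:ℝ) * (α * m / 4) :=
      mul_lt_mul_of_pos_left (by linarith) hnR
    have h3 : (Fintype.card X:ℝ) * (α * m / 4) ≤ (#B:ℝ) * m / 4 := by nlinarith
    have hdev : (m:ℝ) * #B / 2 ≤ (m:ℝ) * #B - (Fintype.card X:ℝ) * hits B T := by nlinarith
    have heq : ((Fintype.card X : ℝ) * hits B T - (m:ℝ) * #B)^2
        = ((m:ℝ) * #B - (Fintype.card X:ℝ) * hits B T)^2 := by ring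
    rw [heq]
    exact pow_le_pow_left₀ (by positivity) hdev 2
  set Bad := univ.filter fun T : Fin m → X => hits B T < k with hBad
  have hsum : (#Bad : ℝ) * ((m:ℝ) * #B / 2)^2
      ≤ (Fintype.card X : ℝ)^m * (m:ℝ) * #B * ((Fintype.card X : ℝ) - #B) := by
    rw [← cheb_var B m']
    calc (#Bad : ℝ) * ((m:ℝ) * #B / 2)^2
        = ∑ _T ∈ Bad, ((m:ℝ) * #B / 2)^2 := by rw [Finset.sum_const, nsmul_eq_mul]
      _ ≤ ∑ T ∈ Bad, ((Fintype.card X : ℝ) * hits B T - (m:ℝ) * #B)^2 :=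
          Finset.sum_le_sum (fun T hT => key T (mem_filter.1 hT).2)
      _ ≤ ∑ T : Fin m → X, ((Fintype.card X : ℝ) * hits B T - (m:ℝ) * #B)^2 :=
          Finset.sum_le_sum_of_subset_of_nonneg (filter_subset _ _)
            (fun T _ _ => by positivity)
  have hfinal : 2 * (#Bad : ℝ) ≤ (Fintype.card X:ℝ)^m := by
    have h8 : 8 * (Fintype.card X:ℝ) ≤ (m:ℝ) * #B := by nlinarith
    have hnm : (0:ℝ) < (Fintype.card X:ℝ)^m := by positivity
    have hQ : (0:ℝ) < ((m:ℝ) * #B / 2)^2 := by positivity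
    have hstep1 : (Fintype.card X : ℝ)^m * (m:ℝ) * #B * ((Fintype.card X : ℝ) - #B)
        ≤ (Fintype.card X : ℝ)^m * ((m:ℝ) * #B) * (Fintype.card X : ℝ) := by nlinarith
    have hstep2 : 2 * ((Fintype.card X : ℝ)^m * ((m:ℝ) * #B) * (Fintype.card X : ℝ))
        ≤ (Fintype.card X:ℝ)^m * ((m:ℝ) * #B / 2)^2 := by nlinarith
    have hmain : (2 * (#Bad : ℝ)) * ((m:ℝ) * #B / 2)^2
        ≤ (Fintype.card X:ℝ)^m * ((m:ℝ) * #B / 2)^2 := by nlinarith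
    exact le_of_mul_le_mul_right hmain hQ
  exact_mod_cast hfinal
end ChebR

section Main
variable {G : Type} [AddCommGroup G] [Fintype G] [DecidableEq G] (A : Finset G) (d : ℕ)

/-- the translate `g - A` -/
def Bset (A : Finset G) (g : G) : Finset G := A.image (fun a => g - a)

lemma trace_bound
    (hVC : ∀ S : Finset G,
      (∀ T ⊆ S, ∃ x : G, S ∩ A.image (fun a => x - a) = T) → S.card ≤ d)
    (E : Finset G) :
    #((univ : Finset G).image fun g => E ∩ Bset A g) ≤ ∑ i ∈ Iic d, (#E).choose i := by
  set 𝒜 := (univ : Finset G).image fun g => E ∩ Bset A g with h𝒜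
  have h1 := Finset.card_le_card_shatterer 𝒜
  have h2 : 𝒜.shatterer ⊆ (Iic d).biUnion (fun i => E.powersetCard i) := by
    intro s hs
    rw [mem_shatterer] at hs
    have hsE : s ⊆ E := by
      obtain ⟨t, ht, hst⟩ := hs.exists_superset
      rw [h𝒜, mem_image] at ht
      obtain ⟨g, -, rfl⟩ := ht
      exact hst.trans inter_subset_left
    have hsd : #s ≤ d := by
      apply hVC s
      intro T hT
      obtain ⟨u, hu, h⟩ := hs hT
      rw [h𝒜, mem_image] at hu
      obtain ⟨g, -, rfl⟩ := hu
      refine ⟨g, ?_⟩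
      rw [← h, show s ∩ (E ∩ Bset A g) = s ∩ Bset A g by
        rw [← inter_assoc, inter_eq_left.2 hsE]]
      rfl
    exact mem_biUnion.2 ⟨#s, mem_Iic.2 hsd, mem_powersetCard.2 ⟨hsE, rfl⟩⟩
  calc #𝒜 ≤ #𝒜.shatterer := h1
    _ ≤ #((Iic d).biUnion (fun i => E.powersetCard i)) := card_le_card h2
    _ ≤ ∑ i ∈ Iic d, #(E.powersetCard i) := card_biUnion_le
    _ = ∑ i ∈ Iic d, (#E).choose i := by
        exact Finset.sum_congr rfl fun i _ => card_powersetCard i E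

/-- coordinate swap -/
def phi {m : ℕ} (I : Fin m → Bool) (w : (Fin m → G) × (Fin m → G)) :
    (Fin m → G) × (Fin m → G) :=
  (fun i => if I i then w.2 i else w.1 i, fun i => if I i then w.1 i else w.2 i)

lemma phi_invol {m : ℕ} (I : Fin m → Bool) (w : (Fin m → G) × (Fin m → G)) :
    phi I (phi I w) = w := by
  unfold phi
  refine Prod.ext ?_ ?_ <;> funext i <;> cases hI : I i <;> simp [hI]

/-- the double-sample event -/
def dcond (A : Finset G) (k m : ℕ) (w : (Fin m → G) × (Fin m → G)) : Prop :=
  ∃ g : G, (∀ i, w.1 i ∉ Bset A g) ∧ k ≤ hits (Bset A g) w.2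

instance (k m : ℕ) : DecidablePred (dcond A k m) := fun w =>
  Fintype.decidableExistsFintype

/-- Per-`w` count of good swaps. -/
lemma swap_count
    (hVC : ∀ S : Finset G,
      (∀ T ⊆ S, ∃ x : G, S ∩ A.image (fun a => x - a) = T) → S.card ≤ d)
    (k m : ℕ) (w : (Fin m → G) × (Fin m → G)) :
    #(univ.filter fun I : Fin m → Bool => dcond A k m (phi I w)) * 2^k
      ≤ (∑ i ∈ Iic d, (2*m).choose i) * 2^m := by
  classical
  set E := (univ.image w.1) ∪ (univ.image w.2) with hE
  have hEcard : #E ≤ 2 * m := by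
    calc #E ≤ #(univ.image w.1) + #(univ.image w.2) := card_union_le _ _
      _ ≤ m + m := Nat.add_le_add
          ((card_image_le).trans (by simp))
          ((card_image_le).trans (by simp))
      _ = 2 * m := by ring
  set 𝒯 := (univ : Finset G).image fun g => E ∩ Bset A g with h𝒯
  have h𝒯card : #𝒯 ≤ ∑ i ∈ Iic d, (2*m).choose i := by
    refine (trace_bound A d hVC E).trans ?_
    exact Finset.sum_le_sum fun i _ => Nat.choose_le_choose i hEcard
  set D : Finset G → Finset (Fin m) :=
    fun t => univ.filter fun i => w.1 i ∈ t ∨ w.2 i ∈ t with hD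
  set bb : Finset G → Fin m → Bool := fun t i => decide (w.1 i ∈ t) with hbb
  have hsub : (univ.filter fun I : Fin m → Bool => dcond A k m (phi I w))
      ⊆ 𝒯.biUnion fun t => univ.filter fun I =>
          (∀ i ∈ D t, I i = bb t i) ∧ k ≤ #(D t) := by
    intro I hI
    rw [mem_filter] at hI
    obtain ⟨-, g, hmiss, hhit⟩ := hI
    have hw1E : ∀ i, w.1 i ∈ E := fun i => mem_union_left _ (mem_image_of_mem _ (mem_univ i))
    have hw2E : ∀ i, w.2 i ∈ E := fun i => mem_union_right _ (mem_image_of_mem _ (mem_univ i))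
    set t := E ∩ Bset A g with ht
    have htmem : t ∈ 𝒯 := mem_image_of_mem _ (mem_univ g)
    have hmem1 : ∀ i, (w.1 i ∈ t ↔ w.1 i ∈ Bset A g) := fun i => by
      simp [ht, hw1E i]
    have hmem2 : ∀ i, (w.2 i ∈ t ↔ w.2 i ∈ Bset A g) := fun i => by
      simp [ht, hw2E i]
    refine mem_biUnion.2 ⟨t, htmem, mem_filter.2 ⟨mem_univ _, ?_, ?_⟩⟩
    · intro i hi
      have hmi := hmiss i
      simp only [phi] at hmi
      rw [hD, mem_filter] at hi
      cases hI : I i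
      · simp only [hI, Bool.false_eq_true, if_false] at hmi
        have h1 : w.1 i ∉ t := fun h => hmi ((hmem1 i).1 h)
        simp only [hbb, hI]
        simp [h1]
      · simp only [hI, if_true] at hmi
        have h2 : w.2 i ∉ t := fun h => hmi ((hmem2 i).1 h)
        rcases hi.2 with h1 | h2'
        · simp only [hbb, hI]
          simp [h1]
        · exact absurd h2' h2
    · refine hhit.trans (card_le_card ?_)
      intro i hi
      rw [mem_filter] at hi
      have := hi.2
      simp only [phi] at this
      rw [hD, mem_filter]
      refine ⟨mem_univ _, ?_⟩
      cases hI : I i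
      · simp only [hI, Bool.false_eq_true, if_false] at this
        exact Or.inr ((hmem2 i).2 this)
      · simp only [hI, if_true] at this
        exact Or.inl ((hmem1 i).2 this)
  calc #(univ.filter fun I : Fin m → Bool => dcond A k m (phi I w)) * 2^k
      ≤ (∑ t ∈ 𝒯, #(univ.filter fun I : Fin m → Bool =>
          (∀ i ∈ D t, I i = bb t i) ∧ k ≤ #(D t))) * 2^k :=
        Nat.mul_le_mul_right _ ((card_le_card hsub).trans card_biUnion_le)
    _ = ∑ t ∈ 𝒯, #(univ.filter fun I : Fin m → Bool =>
          (∀ i ∈ D t, I i = bb t i) ∧ k ≤ #(D t)) * 2^k := by rw [Finset.sum_mul]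
    _ ≤ ∑ t ∈ 𝒯, 2^m := by
        refine Finset.sum_le_sum fun t _ => ?_
        by_cases hk : k ≤ #(D t)
        · have hkm : k ≤ m := hk.trans ((card_le_univ _).trans (by simp))
          have : (univ.filter fun I : Fin m → Bool =>
              (∀ i ∈ D t, I i = bb t i) ∧ k ≤ #(D t))
              ⊆ univ.filter fun I : Fin m → Bool => ∀ i ∈ D t, I i = bb t i := by
            intro I hI; rw [mem_filter] at hI ⊢; exact ⟨hI.1, hI.2.1⟩
          calc #(univ.filter fun I : Fin m → Bool =>
                (∀ i ∈ D t, I i = bb t i) ∧ k ≤ #(D t)) * 2^k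
              ≤ 2^(m - #(D t)) * 2^k := by
                rw [← count_forced (D t) (bb t)]
                exact Nat.mul_le_mul_right _ (card_le_card this)
            _ ≤ 2^(m - k) * 2^k := by
                apply Nat.mul_le_mul_right
                exact Nat.pow_le_pow_right (by norm_num) (Nat.sub_le_sub_left hk m)
            _ = 2^(m - k + k) := (pow_add 2 _ _).symm
            _ ≤ 2^m := by
                apply Nat.pow_le_pow_right (by norm_num)
                omega
        · have : (univ.filter fun I : Fin m → Bool =>
              (∀ i ∈ D t, I i = bb t i) ∧ k ≤ #(D t)) = ∅ := by
            refine filter_eq_empty_iff.2 fun I _ => ?_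
            simp [hk]
          simp [this]
    _ = #𝒯 * 2^m := by rw [Finset.sum_const, smul_eq_mul]
    _ ≤ (∑ i ∈ Iic d, (2*m).choose i) * 2^m := Nat.mul_le_mul_right _ h𝒯card


lemma stepB
    (hVC : ∀ S : Finset G,
      (∀ T ⊆ S, ∃ x : G, S ∩ A.image (fun a => x - a) = T) → S.card ≤ d)
    (k m : ℕ) :
    #(univ.filter (dcond A k m)) * 2^k
      ≤ (Fintype.card G)^m * (Fintype.card G)^m * (∑ i ∈ Iic d, (2*m).choose i) := by
  have hswap : ∀ I : Fin m → Bool,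
      #(univ.filter fun w : (Fin m → G) × (Fin m → G) => dcond A k m (phi I w))
        = #(univ.filter (dcond A k m)) := by
    intro I
    refine Finset.card_bij' (fun w _ => phi I w) (fun w _ => phi I w) ?_ ?_ ?_ ?_
    · intro w hw
      rw [mem_filter] at hw ⊢
      exact ⟨mem_univ _, hw.2⟩
    · intro w hw
      rw [mem_filter] at hw ⊢
      refine ⟨mem_univ _, ?_⟩
      rw [phi_invol]
      exact hw.2
    · intro w _; exact phi_invol I w
    · intro w _; exact phi_invol I w
  have hsum : #(univ.filter (dcond A k m)) * 2^m
      = ∑ w : (Fin m → G) × (Fin m → G),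
          #(univ.filter fun I : Fin m → Bool => dcond A k m (phi I w)) := by
    have e1 : #(univ.filter (dcond A k m)) * 2^m
        = ∑ I : Fin m → Bool,
            #(univ.filter fun w : (Fin m → G) × (Fin m → G) => dcond A k m (phi I w)) := by
      rw [Finset.sum_congr rfl (fun I _ => hswap I), Finset.sum_const, card_univ,
        Fintype.card_fun, Fintype.card_bool, Fintype.card_fin, smul_eq_mul, mul_comm]
    rw [e1]
    have e2 : ∀ I : Fin m → Bool,
        #(univ.filter fun w : (Fin m → G) × (Fin m → G) => dcond A k m (phi I w))
        = ∑ w : (Fin m → G) × (Fin m → G), if dcond A k m (phi I w) then 1 else 0 :=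
      fun I => Finset.card_filter _ _
    have e3 : ∀ w : (Fin m → G) × (Fin m → G),
        #(univ.filter fun I : Fin m → Bool => dcond A k m (phi I w))
        = ∑ I : Fin m → Bool, if dcond A k m (phi I w) then 1 else 0 :=
      fun w => Finset.card_filter _ _
    simp only [e2, e3]
    exact Finset.sum_comm
  have main : #(univ.filter (dcond A k m)) * 2^k * 2^m
      ≤ ((Fintype.card G)^m * (Fintype.card G)^m * (∑ i ∈ Iic d, (2*m).choose i)) * 2^m := by
    calc #(univ.filter (dcond A k m)) * 2^k * 2^m
        = (#(univ.filter (dcond A k m)) * 2^m) * 2^k := by ring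
      _ = (∑ w : (Fin m → G) × (Fin m → G),
            #(univ.filter fun I : Fin m → Bool => dcond A k m (phi I w))) * 2^k := by
          rw [hsum]
      _ = ∑ w : (Fin m → G) × (Fin m → G),
            #(univ.filter fun I : Fin m → Bool => dcond A k m (phi I w)) * 2^k :=
          Finset.sum_mul ..
      _ ≤ ∑ _w : (Fin m → G) × (Fin m → G), (∑ i ∈ Iic d, (2*m).choose i) * 2^m :=
          Finset.sum_le_sum (fun w _ => swap_count A d hVC k m w)
      _ = ((Fintype.card G)^m * (Fintype.card G)^m * (∑ i ∈ Iic d, (2*m).choose i)) * 2^m := by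
          rw [Finset.sum_const, card_univ, Fintype.card_prod, Fintype.card_fun, Fintype.card_fin,
            smul_eq_mul]
          ring
  exact Nat.le_of_mul_le_mul_right main (by positivity)


lemma stepA (α : ℝ) (hα : 0 < α) (hA : α * (Fintype.card G : ℝ) ≤ (#A : ℝ)) (m' : ℕ)
    (hm : 8 ≤ α * ((m' + 2 : ℕ) : ℝ))
    (hAll : ∀ T : Fin (m'+2) → G, ∃ g, ∀ i, T i ∉ Bset A g) :
    (Fintype.card G)^(m'+2) * (Fintype.card G)^(m'+2)
      ≤ 2 * #(univ.filter (dcond A (⌈α * ((m' + 2 : ℕ) : ℝ) / 4⌉₊) (m'+2))) := by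
  classical
  set m : ℕ := m' + 2 with hmdef
  set k : ℕ := ⌈α * ((m : ℕ) : ℝ) / 4⌉₊ with hkdef
  choose gw hgw using hAll
  have hBcard : ∀ g : G, #(Bset A g) = #A := fun g =>
    card_image_of_injective _ sub_right_injective
  have hgood : ∀ T : Fin m → G,
      (Fintype.card G)^m ≤ 2 * #(univ.filter fun T' : Fin m → G =>
        k ≤ hits (Bset A (gw T)) T') := by
    intro T
    have hbad := cheb (Bset A (gw T)) α hα m' (by rw [hBcard]; exact hA) hm
    have hsplit := Finset.card_filter_add_card_filter_not
      (s := (univ : Finset (Fin m → G)))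
      (p := fun T' : Fin m → G => hits (Bset A (gw T)) T' < k)
    have hcu : #(univ : Finset (Fin m → G)) = (Fintype.card G)^m := by
      rw [card_univ, Fintype.card_fun, Fintype.card_fin]
    have hng : (univ.filter fun T' : Fin m → G => ¬ hits (Bset A (gw T)) T' < k)
        = univ.filter fun T' : Fin m → G => k ≤ hits (Bset A (gw T)) T' := by
      apply filter_congr; intro T' _; simp [not_lt]
    rw [hcu, hng] at hsplit
    have hfix : (univ.filter fun T' : Fin m → G =>
        hits (Bset A (gw T)) T' < ⌈α * ((m' + 2 : ℕ) : ℝ) / 4⌉₊)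
        = (univ.filter fun T' : Fin m → G => hits (Bset A (gw T)) T' < k) := rfl
    rw [hfix, show (Fintype.card G)^(m'+2) = (Fintype.card G)^m from rfl] at hbad
    omega
  have e : #(univ.filter (dcond A k m))
      = ∑ w : (Fin m → G) × (Fin m → G), if dcond A k m w then 1 else 0 :=
    Finset.card_filter _ _
  have mono : ∀ w : (Fin m → G) × (Fin m → G),
      (if k ≤ hits (Bset A (gw w.1)) w.2 then 1 else 0)
        ≤ (if dcond A k m w then 1 else 0) := by
    intro w
    by_cases h : k ≤ hits (Bset A (gw w.1)) w.2
    · have : dcond A k m w := ⟨gw w.1, hgw w.1, h⟩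
      simp [h, this]
    · simp [h]
  calc (Fintype.card G)^m * (Fintype.card G)^m
      = ∑ _T : Fin m → G, (Fintype.card G)^m := by
        rw [Finset.sum_const, card_univ, Fintype.card_fun, Fintype.card_fin, smul_eq_mul]
    _ ≤ ∑ T : Fin m → G, 2 * #(univ.filter fun T' : Fin m → G =>
          k ≤ hits (Bset A (gw T)) T') := Finset.sum_le_sum (fun T _ => hgood T)
    _ = 2 * ∑ T : Fin m → G, ∑ T' : Fin m → G,
          (if k ≤ hits (Bset A (gw T)) T' then 1 else 0) := by
        rw [Finset.mul_sum]
        exact Finset.sum_congr rfl fun T _ => by rw [Finset.card_filter]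
    _ = 2 * ∑ w : (Fin m → G) × (Fin m → G),
          (if k ≤ hits (Bset A (gw w.1)) w.2 then 1 else 0) := by
        rw [Fintype.sum_prod_type]
    _ ≤ 2 * ∑ w : (Fin m → G) × (Fin m → G), (if dcond A k m w then 1 else 0) :=
        Nat.mul_le_mul_left 2 (Finset.sum_le_sum fun w _ => mono w)
    _ = 2 * #(univ.filter (dcond A k m)) := by rw [e]

theorem core (α : ℝ) (hα : 0 < α) (hA : α * (Fintype.card G : ℝ) ≤ (#A : ℝ))
    (hVC : ∀ S : Finset G,
      (∀ T ⊆ S, ∃ x : G, S ∩ A.image (fun a => x - a) = T) → S.card ≤ d)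
    (m' : ℕ) (hm : 8 ≤ α * ((m' + 2 : ℕ) : ℝ))
    (hS : 2 * (∑ i ∈ Iic d, (2*(m'+2)).choose i) < 2^(⌈α * ((m' + 2 : ℕ) : ℝ) / 4⌉₊)) :
    ∃ T : Fin (m'+2) → G, ∀ g : G, ∃ i, T i ∈ Bset A g := by
  by_contra hcon
  push_neg at hcon
  set m : ℕ := m' + 2 with hmdef
  set k : ℕ := ⌈α * ((m : ℕ) : ℝ) / 4⌉₊ with hkdef
  have h1 := stepA A α hα hA m' hm hcon
  have h2 := stepB A d hVC k m
  have hn2 : 0 < (Fintype.card G)^m * (Fintype.card G)^m := by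
    have : 0 < Fintype.card G := Fintype.card_pos
    positivity
  have chain : (Fintype.card G)^m * (Fintype.card G)^m * 2^k
      < (Fintype.card G)^m * (Fintype.card G)^m * 2^k := by
    calc (Fintype.card G)^m * (Fintype.card G)^m * 2^k
        ≤ (2 * #(univ.filter (dcond A k m))) * 2^k := Nat.mul_le_mul_right _ h1
      _ = 2 * (#(univ.filter (dcond A k m)) * 2^k) := by ring
      _ ≤ 2 * ((Fintype.card G)^m * (Fintype.card G)^m * (∑ i ∈ Iic d, (2*m).choose i)) :=
          Nat.mul_le_mul_left 2 h2
      _ = ((Fintype.card G)^m * (Fintype.card G)^m) * (2 * ∑ i ∈ Iic d, (2*m).choose i) := by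
          ring
      _ < ((Fintype.card G)^m * (Fintype.card G)^m) * 2^k :=
          mul_lt_mul_of_pos_left hS hn2
      _ = (Fintype.card G)^m * (Fintype.card G)^m * 2^k := by ring
  exact lt_irrefl _ chain

end Main


lemma exists_m (d : ℕ) (α : ℝ) (hα : 0 < α) :
    ∃ m' : ℕ, 8 ≤ α * ((m' + 2 : ℕ) : ℝ) ∧
      2 * (∑ i ∈ Iic d, (2*(m'+2)).choose i) < 2^(⌈α * ((m' + 2 : ℕ) : ℝ) / 4⌉₊) := by
  set c : ℝ := (2 : ℝ) ^ (α/4 : ℝ) with hc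
  have hc1 : 1 < c := by
    rw [hc]
    apply Real.one_lt_rpow_iff_of_pos (by norm_num) |>.2
    exact Or.inl ⟨by norm_num, by positivity⟩
  have htend := tendsto_pow_const_div_const_pow_of_one_lt d hc1
  set ε : ℝ := 1 / (2*((d:ℝ)+1)*3^d + 1) with hε
  have hε0 : 0 < ε := by positivity
  obtain ⟨M, hM⟩ := (Filter.eventually_atTop).1
    ((htend.eventually (gt_mem_nhds hε0)).and (Filter.eventually_ge_atTop ⌈8/α⌉₊))
  obtain ⟨n, hn2, hfn, hceil⟩ : ∃ n : ℕ, 2 ≤ n ∧ ((n:ℝ)^d / c^n < ε) ∧ ⌈8/α⌉₊ ≤ n :=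
    ⟨M+2, by omega, (hM (M+2) (by omega)).1, (hM (M+2) (by omega)).2⟩
  have hnn : n - 2 + 2 = n := by omega
  refine ⟨n - 2, ?_, ?_⟩ <;> rw [hnn]
  · -- 8 ≤ α * n
    have h1 : (8:ℝ)/α ≤ (⌈8/α⌉₊ : ℝ) := Nat.le_ceil _
    have h2 : ((⌈8/α⌉₊ : ℕ) : ℝ) ≤ (n : ℝ) := by exact_mod_cast hceil
    rw [show (8:ℝ) = (8/α) * α by field_simp]
    calc (8/α) * α ≤ (n:ℝ) * α := mul_le_mul_of_nonneg_right (h1.trans h2) hα.le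
      _ = α * n := mul_comm _ _
  · have hnat : 2 * (∑ i ∈ Iic d, (2*n).choose i) ≤ 2 * ((d+1) * (2*n+1)^d) := by
      apply Nat.mul_le_mul_left
      calc ∑ i ∈ Iic d, (2*n).choose i ≤ ∑ i ∈ Iic d, (2*n+1)^d := by
            apply Finset.sum_le_sum
            intro i hi
            calc (2*n).choose i ≤ (2*n)^i := Nat.choose_le_pow _ _
              _ ≤ (2*n+1)^i := Nat.pow_le_pow_left (by omega) _
              _ ≤ (2*n+1)^d := Nat.pow_le_pow_right (by omega) (mem_Iic.1 hi)
        _ = (d+1) * (2*n+1)^d := by rw [Finset.sum_const, Nat.card_Iic, smul_eq_mul]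
    have hne : (0:ℝ) < c ^ n := by positivity
    have hnd : ((n:ℝ))^d < ε * c^n := by rw [div_lt_iff₀ hne] at hfn; exact hfn
    have hn2R : (2:ℝ) ≤ (n:ℝ) := by exact_mod_cast hn2
    have hLHS : ((2 * ((d+1) * (2*n+1)^d) : ℕ) : ℝ) ≤ 2*((d:ℝ)+1) * (3^d * (n:ℝ)^d) := by
      push_cast
      have h3 : (2*(n:ℝ)+1)^d ≤ (3*(n:ℝ))^d :=
        pow_le_pow_left₀ (by positivity) (by linarith) d
      rw [mul_pow] at h3
      calc 2*(((d:ℝ)+1) * (2*(n:ℝ)+1)^d) = (2*((d:ℝ)+1)) * (2*(n:ℝ)+1)^d := by ring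
        _ ≤ (2*((d:ℝ)+1)) * ((3:ℝ)^d * (n:ℝ)^d) :=
            mul_le_mul_of_nonneg_left h3 (by positivity)
        _ = 2*((d:ℝ)+1) * (3^d * (n:ℝ)^d) := by ring
    have hfrac : 2*((d:ℝ)+1)*3^d * ε < 1 := by
      rw [hε, mul_one_div, div_lt_one (by positivity)]
      linarith
    have hstep : 2*((d:ℝ)+1) * ((3:ℝ)^d * (n:ℝ)^d) < c^n := by
      calc 2*((d:ℝ)+1) * ((3:ℝ)^d * (n:ℝ)^d) = (2*((d:ℝ)+1)*3^d) * ((n:ℝ)^d) := by ring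
        _ < (2*((d:ℝ)+1)*3^d) * (ε * c^n) := mul_lt_mul_of_pos_left hnd (by positivity)
        _ = (2*((d:ℝ)+1)*3^d*ε) * c^n := by ring
        _ < 1 * c^n := mul_lt_mul_of_pos_right hfrac hne
        _ = c^n := one_mul _
    have hRHS : c^n ≤ ((2^(⌈α * ((n : ℕ) : ℝ) / 4⌉₊) : ℕ) : ℝ) := by
      have e1 : c^n = (2:ℝ) ^ ((α/4) * (n:ℝ) : ℝ) := by
        rw [hc, ← Real.rpow_natCast ((2:ℝ) ^ (α/4 : ℝ)) n, ← Real.rpow_mul (by norm_num)]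
      have e2 : ((2^(⌈α * ((n : ℕ) : ℝ) / 4⌉₊) : ℕ) : ℝ)
          = (2:ℝ) ^ (((⌈α * ((n : ℕ) : ℝ) / 4⌉₊ : ℕ) : ℝ) : ℝ) := by
        rw [Real.rpow_natCast]
        push_cast
        ring
      rw [e1, e2]
      apply Real.rpow_le_rpow_of_exponent_le (by norm_num)
      calc (α/4) * (n:ℝ) = α * (n : ℝ) / 4 := by ring
        _ ≤ _ := Nat.le_ceil _
    have hfin : ((2 * (∑ i ∈ Iic d, (2*n).choose i) : ℕ) : ℝ)
        < ((2^(⌈α * ((n : ℕ) : ℝ) / 4⌉₊) : ℕ) : ℝ) := by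
      calc ((2 * (∑ i ∈ Iic d, (2*n).choose i) : ℕ) : ℝ)
          ≤ ((2 * ((d+1) * (2*n+1)^d) : ℕ) : ℝ) := by exact_mod_cast hnat
        _ ≤ 2*((d:ℝ)+1) * (3^d * (n:ℝ)^d) := hLHS
        _ < c^n := hstep
        _ ≤ _ := hRHS
    exact_mod_cast hfin

theorem statement18 (d : ℕ) (α : ℝ) (hα : 0 < α) :
    ∃ C : ℕ, ∀ (G : Type) [AddCommGroup G] [Fintype G] [DecidableEq G],
      ∀ A : Finset G, α * (Fintype.card G : ℝ) ≤ (A.card : ℝ) →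
      -- the family { x − A : x ∈ G } has VC dimension at most d:
      (∀ S : Finset G,
        (∀ T ⊆ S, ∃ x : G, S ∩ A.image (fun a => x - a) = T) → S.card ≤ d) →
      ∃ T : Finset G, T.card ≤ C ∧ ∀ g : G, ∃ a ∈ A, ∃ t ∈ T, g = a + t := by
  obtain ⟨m', h8, hS⟩ := exists_m d α hα
  refine ⟨m' + 2, ?_⟩
  intro G _ _ _ A hA hVC
  obtain ⟨T, hT⟩ := core A d α hα hA hVC m' h8 hS
  refine ⟨univ.image T, (Finset.card_image_le).trans (by simp), ?_⟩
  intro g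
  obtain ⟨i, hi⟩ := hT g
  obtain ⟨a, ha, hai⟩ := Finset.mem_image.1 hi
  exact ⟨a, ha, T i, Finset.mem_image_of_mem T (Finset.mem_univ i), by rw [← hai]; abel⟩
end

section
/- Let L : c_1 x_1 + ... + c_k x_k = 0 be a homogeneous linear equation with k ≥ 3 and c_1, ..., c_k ∈ ℤ \ {0}, and set D = |c_1| + ... + |c_k|. Let m ≥ 1 be an integer, let E_0 ⊆ ℤ/mℤ be L-solution-free, and let p be a prime with p > Dm. Let φ : ℤ/mℤ → F_p be the map sending each residue class to its standard representative in {0, 1, ..., m−1} ⊆ F_p, and set E = φ(E_0). Then E is L-solution-free in F_p. -/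
/-- `A` is solution-free for the equation `∑ i, c i * x i = 0`: there is no tuple of
pairwise distinct elements of `A` solving the equation. -/
def SolutionFree {G : Type*} [AddCommGroup G] {k : ℕ} (c : Fin k → ℤ) (A : Set G) : Prop :=
  ¬ ∃ x : Fin k → G, (∀ i, x i ∈ A) ∧ Function.Injective x ∧ ∑ i, c i • x i = 0

theorem statement19 {k : ℕ} (hk : 3 ≤ k) (c : Fin k → ℤ) (hc : ∀ i, c i ≠ 0)
    (m : ℕ) [NeZero m] (E₀ : Set (ZMod m)) (hE₀ : SolutionFree c E₀)
    (p : ℕ) (hp : p.Prime) (hpm : (∑ i, (c i).natAbs) * m < p) :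
    SolutionFree c ((fun x : ZMod m => ((x.val : ℕ) : ZMod p)) '' E₀) := by
  rintro ⟨x, hxA, hxinj, hsum⟩
  choose y hyE hyx using hxA
  apply hE₀
  refine ⟨y, hyE, ?_, ?_⟩
  · intro i j hij
    exact hxinj (by rw [← hyx i, ← hyx j, hij])
  · set S : ℤ := ∑ i, c i * (y i).val with hS
    have hSp : (S : ZMod p) = 0 := by
      have h1 : (S : ZMod p) = ∑ i, c i • x i := by
        rw [hS]
        push_cast
        refine Finset.sum_congr rfl fun i _ => ?_
        rw [← hyx i]
        simp [zsmul_eq_mul]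
      rw [h1, hsum]
    have hdvd : (p : ℤ) ∣ S := (ZMod.intCast_zmod_eq_zero_iff_dvd S p).mp hSp
    have habs : |S| < p := by
      calc |S| ≤ ∑ i, |c i * (y i).val| := Finset.abs_sum_le_sum_abs _ _
        _ ≤ ∑ i, |c i| * m := by
            refine Finset.sum_le_sum fun i _ => ?_
            rw [abs_mul]
            have : |((y i).val : ℤ)| ≤ m := by
              rw [abs_of_nonneg (by positivity)]
              exact_mod_cast le_of_lt (ZMod.val_lt (y i))
            exact mul_le_mul_of_nonneg_left this (abs_nonneg _)
        _ = ((∑ i, (c i).natAbs : ℕ) : ℤ) * m := by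
            rw [← Finset.sum_mul]
            congr 1
            push_cast
            rfl
        _ < p := by exact_mod_cast hpm
    have hS0 : S = 0 := Int.eq_zero_of_abs_lt_dvd hdvd habs
    have : ((S : ℤ) : ZMod m) = 0 := by rw [hS0]; simp
    rw [hS] at this
    push_cast at this
    simpa [zsmul_eq_mul, ZMod.natCast_val, ZMod.cast_id] using this
end
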